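/- arXiv:1701.08506 — 7 statements merged into one kernel-verified Lean document; each statement's English description precedes it below -/
import Mathlib

section
/- If H is a two-way-infinite Hamilton path in Cay(ℤ, S) with S finite, then the number of edges {u, v} of H with u ≤ 0 and v ≥ 1 is odd. -/
/-!
Walking along a Hamilton path `H` of a graph on `ℤ` enumerates `ℤ` as a bijection `F : ℤ → ℤ`
with `H`'s edges `{F n, F (n + 1)}`. Since `F` is a bijection, both `{n | F n ≤ 0}` and
`{n | F n > 0}` are infinite, while edges of `Cay(ℤ, S)` have bounded length, so only finitely
many steps of `F` change side. Hence `F` eventually stays on one side in each direction, and on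
opposite sides in the two directions; an odd number of side changes is needed to get across.
-/

/-- Infinite circulant graph on ℤ: `u ~ v` iff `u - v ∈ S` or `v - u ∈ S`. -/
def cay (S : Set ℤ) : SimpleGraph ℤ where
  Adj u v := u ≠ v ∧ (u - v ∈ S ∨ v - u ∈ S)
  symm := by
    constructor
    intro u v h
    exact ⟨h.1.symm, h.2.symm⟩
  loopless := by
    constructor
    intro v h
    exact h.1 rfl

/-- `H` is a two-way-infinite Hamilton path of `G`: a connected spanning subgraph
in which every vertex has degree 2. -/
def IsHamPath (G H : SimpleGraph ℤ) : Prop :=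
  H ≤ G ∧ H.Connected ∧ ∀ v : ℤ, (H.neighborSet v).ncard = 2

/-- `G` decomposes into `k` edge-disjoint two-way-infinite Hamilton paths. -/
def HamDecomp (G : SimpleGraph ℤ) (k : ℕ) : Prop :=
  ∃ D : Fin k → SimpleGraph ℤ,
    (∀ i, IsHamPath G (D i)) ∧
    (∀ i j, i ≠ j → Disjoint (D i).edgeSet (D j).edgeSet) ∧
    ∀ e ∈ G.edgeSet, ∃ i, e ∈ (D i).edgeSet

theorem odd_card_filter_not_iff_succ_iff (p : ℤ → Prop) [DecidablePred p] {a b : ℤ}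
    (hab : a ≤ b) :
    Odd ((Finset.Ico a b).filter fun n => ¬(p n ↔ p (n + 1))).card ↔ ¬(p a ↔ p b) := by
  induction b, hab using Int.leInduction with
  | base => simp
  | succ b hab ih =>
    rw [Finset.Ico_add_one_right_eq_Icc, ← Finset.Ico_insert_right hab, Finset.filter_insert]
    split_ifs with hb
    · rw [ih]
      tauto
    · rw [Finset.card_insert_of_notMem (by simp), Nat.odd_add_one, ih]
      tauto

theorem odd_ncard_setOf_not_iff_succ {p : ℤ → Prop} (hfin : {n | ¬(p n ↔ p (n + 1))}.Finite)
    (htrue : {n | p n}.Infinite) (hfalse : {n | ¬p n}.Infinite) :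
    Odd {n | ¬(p n ↔ p (n + 1))}.ncard := by
  classical
  obtain ⟨a, b, hab, hsub⟩ : ∃ a b, a ≤ b ∧ {n | ¬(p n ↔ p (n + 1))} ⊆ Set.Ico a b := by
    obtain ⟨a, ha⟩ := hfin.bddBelow
    obtain ⟨b, hb⟩ := hfin.bddAbove
    exact ⟨min a (b + 1), b + 1, min_le_right _ _,
      fun n hn => ⟨min_le_of_left_le (ha hn), Int.lt_add_one_iff.mpr (hb hn)⟩⟩
  have hiff_of_le {x y : ℤ} (hxy : x ≤ y) (hdisj : Disjoint (Set.Ico x y) (Set.Ico a b)) :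
      p x ↔ p y := by
    by_contra h
    rw [← odd_card_filter_not_iff_succ_iff p hxy, Finset.filter_eq_empty_iff.mpr] at h
    · exact Nat.not_odd_zero h
    · exact fun n hn hK => hdisj.notMem_of_mem_left (Finset.mem_Ico.mp hn) (hsub hK)
  have hcount : {n | ¬(p n ↔ p (n + 1))}.ncard
      = ((Finset.Ico a b).filter fun n => ¬(p n ↔ p (n + 1))).card := by
    rw [← Set.ncard_coe_finset, Finset.coe_filter]
    exact congrArg Set.ncard
      (Set.ext fun n => ⟨fun hn => ⟨Finset.mem_Ico.mpr (hsub hn), hn⟩, And.right⟩)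
  rw [hcount, odd_card_filter_not_iff_succ_iff p hab]
  intro hpab
  have hconst : ∀ n ∉ Set.Ico a b, p n ↔ p a := by
    intro n hn
    by_cases hna : n < a
    · exact hiff_of_le hna.le Set.Ico_disjoint_Ico_same
    · have hbn : b ≤ n := not_lt.mp fun h => hn ⟨not_lt.mp hna, h⟩
      exact (hiff_of_le hbn Set.Ico_disjoint_Ico_same.symm).symm.trans hpab.symm
  by_cases hpa : p a
  · exact hfalse <| (Set.finite_Ico a b).subset fun n hn =>
      by_contra fun hout => hn ((hconst n hout).mpr hpa)
  · exact htrue <| (Set.finite_Ico a b).subset fun n hn =>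
      by_contra fun hout => hpa ((hconst n hout).mp hn)

theorem odd_ncard_setOf_not_le_iff_of_bijective {F : ℤ → ℤ} (hF : F.Bijective) {M : ℕ}
    (hM : ∀ n, (F (n + 1) - F n).natAbs ≤ M) (c : ℤ) :
    Odd {n | ¬(F n ≤ c ↔ F (n + 1) ≤ c)}.ncard := by
  have hpre {s : Set ℤ} (hs : s.Infinite) : (F ⁻¹' s).Infinite :=
    Set.Infinite.preimage' (by rwa [hF.2.range_eq, Set.inter_univ])
  refine odd_ncard_setOf_not_iff_succ ?_ (hpre (Set.Iic_infinite c))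
    ((hpre (Set.Ioi_infinite c)).mono fun n hn => not_le.mpr hn)
  refine ((Set.finite_Icc (c - M) (c + M)).preimage hF.1.injOn).subset fun n hn => ?_
  have := hM n
  simp only [Set.mem_ofPred_eq] at hn
  simp only [Set.mem_preimage, Set.mem_Icc]
  omega

theorem Function.Periodic.finite_range {α : Type*} {f : ℤ → α} {c : ℤ} (h : Function.Periodic f c)
    (hc : 0 < c) : (Set.range f).Finite :=
  ((Set.finite_Ico 0 c).image f).subset <| Set.range_subset_iff.mpr fun x =>
    let ⟨y, hy, hxy⟩ := h.exists_mem_Ico₀ hc x; ⟨y, hy, hxy.symm⟩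

namespace SimpleGraph

variable {V : Type*} {G : SimpleGraph V}

theorem Preconnected.eq_univ_of_adj_mem (hG : G.Preconnected) {s : Set V} {u : V} (hu : u ∈ s)
    (hs : ∀ v ∈ s, ∀ w, G.Adj v w → w ∈ s) : s = Set.univ :=
  Set.eq_univ_of_forall fun v => (hG u v).mem_subgraphVerts (H := (⊤ : G.Subgraph).induce s)
    (fun v hv w hvw => ⟨hv, hs v hv w hvw, hvw⟩) hu

theorem existsUnique_adj_ne_of_ncard_neighborSet_eq_two {v u : V}
    (hv : (G.neighborSet v).ncard = 2) (hu : G.Adj v u) : ∃! w, G.Adj v w ∧ w ≠ u := by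
  obtain ⟨x, y, hxy, hN⟩ := Set.ncard_eq_two.mp hv
  simp only [Set.ext_iff, mem_neighborSet, Set.mem_insert_iff, Set.mem_singleton_iff] at hN
  rcases (hN u).1 hu with rfl | rfl
  · exact ⟨y, ⟨(hN y).2 (Or.inr rfl), hxy.symm⟩, fun w hw => ((hN w).1 hw.1).resolve_left hw.2⟩
  · exact ⟨x, ⟨(hN x).2 (Or.inl rfl), hxy⟩, fun w hw => ((hN w).1 hw.1).resolve_right hw.2⟩

namespace Dart

variable (hG : ∀ v, (G.neighborSet v).ncard = 2)

/-- The dart leaving `d.snd` along its other edge: in a graph of degree two, walking straight on. -/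
noncomputable def next (d : G.Dart) : G.Dart :=
  ⟨(d.snd, (existsUnique_adj_ne_of_ncard_neighborSet_eq_two (hG _) d.adj.symm).exists.choose),
    (existsUnique_adj_ne_of_ncard_neighborSet_eq_two (hG _) d.adj.symm).exists.choose_spec.1⟩

theorem next_fst (d : G.Dart) : (d.next hG).fst = d.snd := rfl

theorem next_snd_ne (d : G.Dart) : (d.next hG).snd ≠ d.fst :=
  (existsUnique_adj_ne_of_ncard_neighborSet_eq_two (hG _) d.adj.symm).exists.choose_spec.2

theorem next_snd_eq {d : G.Dart} {w : V} (hw : G.Adj d.snd w) (hwd : w ≠ d.fst) :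
    (d.next hG).snd = w :=
  (existsUnique_adj_ne_of_ncard_neighborSet_eq_two (hG _) d.adj.symm).unique
    ⟨(d.next hG).adj, next_snd_ne hG d⟩ ⟨hw, hwd⟩

theorem next_symm_next (d : G.Dart) : (d.next hG).symm.next hG = d.symm :=
  Dart.ext _ _ (Prod.ext rfl (next_snd_eq hG d.adj.symm (next_snd_ne hG d).symm))

noncomputable def nextPerm : Equiv.Perm G.Dart where
  toFun := next hG
  invFun d := (d.symm.next hG).symm
  left_inv d := by simp only [next_symm_next, symm_symm]
  right_inv d := by simp only [next_symm_next, symm_symm]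

end Dart

section lineThrough

variable (hG : ∀ v, (G.neighborSet v).ncard = 2)

noncomputable def lineThrough (d : G.Dart) (n : ℤ) : V := ((Dart.nextPerm hG ^ n) d).fst

variable (d : G.Dart)

theorem lineThrough_add_one (n : ℤ) :
    lineThrough hG d (n + 1) = ((Dart.nextPerm hG ^ n) d).snd := by
  rw [lineThrough, add_comm, zpow_one_add, Equiv.Perm.mul_apply]
  exact Dart.next_fst hG _

theorem adj_lineThrough_add_one (n : ℤ) :
    G.Adj (lineThrough hG d n) (lineThrough hG d (n + 1)) := by
  rw [lineThrough_add_one]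
  exact ((Dart.nextPerm hG ^ n) d).adj

theorem lineThrough_add_two_ne (n : ℤ) : lineThrough hG d (n + 2) ≠ lineThrough hG d n := by
  rw [show n + 2 = (n + 1) + 1 by ring, lineThrough_add_one, add_comm, zpow_one_add,
    Equiv.Perm.mul_apply]
  exact Dart.next_snd_ne hG _

theorem neighborSet_lineThrough (n : ℤ) :
    G.neighborSet (lineThrough hG d n) = {lineThrough hG d (n - 1), lineThrough hG d (n + 1)} := by
  have hprev := (adj_lineThrough_add_one hG d (n - 1)).symm
  rw [sub_add_cancel] at hprev
  have hne : lineThrough hG d (n - 1) ≠ lineThrough hG d (n + 1) := by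
    simpa [sub_add_cancel, show n - 1 + 2 = n + 1 by ring] using
      (lineThrough_add_two_ne hG d (n - 1)).symm
  refine (Set.eq_of_subset_of_ncard_le ?_ ?_ (Set.finite_of_ncard_pos (by rw [hG]; norm_num))).symm
  · rintro w (rfl | rfl)
    exacts [hprev, adj_lineThrough_add_one hG d n]
  · rw [hG, Set.ncard_pair hne]

theorem lineThrough_surjective (hconn : G.Preconnected) : (lineThrough hG d).Surjective := by
  refine Set.range_eq_univ.mp (hconn.eq_univ_of_adj_mem (Set.mem_range_self 0) ?_)
  rintro _ ⟨n, rfl⟩ w hw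
  rcases (Set.ext_iff.mp (neighborSet_lineThrough hG d n) w).mp hw with rfl | rfl
  exacts [Set.mem_range_self _, Set.mem_range_self _]

theorem lineThrough_periodic {a k : ℤ} (h₀ : lineThrough hG d a = lineThrough hG d (a + k))
    (h₁ : lineThrough hG d (a + 1) = lineThrough hG d (a + k + 1)) :
    Function.Periodic (lineThrough hG d) k := by
  have hdart : (Dart.nextPerm hG ^ (a + k)) d = (Dart.nextPerm hG ^ a) d :=
    Dart.ext _ _ (Prod.ext h₀.symm (by rw [← lineThrough_add_one, ← lineThrough_add_one, h₁]))
  intro n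
  rw [lineThrough, lineThrough, show n + k = (n - a) + (a + k) by ring, zpow_add,
    Equiv.Perm.mul_apply, hdart, ← Equiv.Perm.mul_apply, ← zpow_add, sub_add_cancel]

theorem lineThrough_injective [Infinite V] (hconn : G.Preconnected) :
    (lineThrough hG d).Injective := by
  -- A vertex met twice is either met twice in a shorter stretch (the walk turned back), or met
  -- twice together with its successor, in which case the walk is periodic and `V` finite.
  suffices h : ∀ k : ℕ, ∀ a, lineThrough hG d a ≠ lineThrough hG d (a + (k + 1)) by
    intro a b hab
    by_contra hne
    rcases lt_or_gt_of_ne hne with hlt | hlt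
    · exact h (b - a - 1).toNat a (by rwa [show a + ((b - a - 1).toNat + 1) = b by omega])
    · exact h (a - b - 1).toNat b (by rwa [show b + ((a - b - 1).toNat + 1) = a by omega, eq_comm])
  intro k
  induction k using Nat.strong_induction_on with
  | _ k ih =>
  intro a hk
  match k with
  | 0 => exact (adj_lineThrough_add_one hG d a).ne (by simpa using hk)
  | 1 => exact lineThrough_add_two_ne hG d a (by rw [hk]; norm_num)
  | j + 2 =>
    have hmem := hk ▸ adj_lineThrough_add_one hG d a
    rw [← mem_neighborSet, neighborSet_lineThrough] at hmem
    rcases hmem with h | h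
    · exact ih j (by omega) (a + 1) (by rw [h]; push_cast; ring_nf)
    · have hfin := (lineThrough_periodic hG d hk
        (by rw [Set.mem_singleton_iff.mp h, add_assoc a])).finite_range (by omega)
      rw [(lineThrough_surjective hG d hconn).range_eq] at hfin
      exact Set.infinite_univ hfin

end lineThrough

theorem exists_iso_hasse_int [Infinite V] (hG : ∀ v, (G.neighborSet v).ncard = 2)
    (hconn : G.Connected) : Nonempty (hasse ℤ ≃g G) := by
  obtain ⟨v⟩ := hconn.nonempty
  obtain ⟨x, y, -, hN⟩ := Set.ncard_eq_two.mp (hG v)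
  have hx : G.Adj v x := by
    rw [← mem_neighborSet, hN]
    exact Set.mem_insert x {y}
  let d : G.Dart := ⟨(v, x), hx⟩
  have hinj := lineThrough_injective hG d hconn.preconnected
  refine ⟨⟨Equiv.ofBijective _ ⟨hinj, lineThrough_surjective hG d hconn.preconnected⟩, ?_⟩⟩
  intro a b
  change G.Adj (lineThrough hG d a) (lineThrough hG d b) ↔ _
  rw [← mem_neighborSet,
    neighborSet_lineThrough, Set.mem_insert_iff, Set.mem_singleton_iff, hinj.eq_iff, hinj.eq_iff,
    hasse_adj, Order.covBy_iff_add_one_eq, Order.covBy_iff_add_one_eq]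
  omega

theorem adj_iff_of_iso_hasse_int (F : hasse ℤ ≃g G) (a b : ℤ) :
    G.Adj (F a) (F b) ↔ b = a + 1 ∨ a = b + 1 := by
  rw [F.map_adj_iff, hasse_adj, Order.covBy_iff_add_one_eq, Order.covBy_iff_add_one_eq]
  omega

theorem ncard_setOf_mem_edgeSet_of_iso_hasse_int (F : hasse ℤ ≃g G) (P : Sym2 V → Prop) :
    {e ∈ G.edgeSet | P e}.ncard = {n : ℤ | P s(F n, F (n + 1))}.ncard := by
  have hinj : (fun n : ℤ => s(F n, F (n + 1))).Injective := by
    intro m n h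
    simp only [Sym2.eq_iff, F.injective.eq_iff] at h
    omega
  rw [← Set.ncard_image_of_injective _ hinj]
  congr 1
  ext e
  induction e using Sym2.ind with | _ u v =>
  obtain ⟨a, rfl⟩ := F.surjective u
  obtain ⟨b, rfl⟩ := F.surjective v
  simp only [mem_edgeSet, Set.mem_image, Set.mem_ofPred_eq]
  constructor
  · rintro ⟨h, hP⟩
    rcases (adj_iff_of_iso_hasse_int F a b).1 h with rfl | rfl
    exacts [⟨a, hP, rfl⟩, ⟨b, by rwa [Sym2.eq_swap], Sym2.eq_swap⟩]
  · rintro ⟨n, hP, he⟩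
    refine ⟨?_, he ▸ hP⟩
    rw [← mem_edgeSet, ← he, mem_edgeSet, adj_iff_of_iso_hasse_int]
    exact Or.inl rfl

end SimpleGraph

theorem natAbs_sub_le_sup_of_cay_adj {S : Finset ℤ} {u v : ℤ} (h : (cay ↑S).Adj u v) :
    (u - v).natAbs ≤ S.sup Int.natAbs := by
  rcases h.2 with hs | hs
  · exact Finset.le_sup (Finset.mem_coe.mp hs)
  · rw [← Int.natAbs_neg, neg_sub]
    exact Finset.le_sup (Finset.mem_coe.mp hs)

theorem stmt3_general (S : Finset ℤ) (H : SimpleGraph ℤ) (hH : IsHamPath (cay ↑S) H) :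
    Odd {e ∈ H.edgeSet | ∃ u v : ℤ, e = s(u, v) ∧ u ≤ 0 ∧ 1 ≤ v}.ncard := by
  obtain ⟨hle, hconn, hdeg⟩ := hH
  obtain ⟨F⟩ := SimpleGraph.exists_iso_hasse_int hdeg hconn
  have hstep (n : ℤ) : (F (n + 1) - F n).natAbs ≤ S.sup Int.natAbs :=
    natAbs_sub_le_sup_of_cay_adj
      (hle ((SimpleGraph.adj_iff_of_iso_hasse_int F _ _).2 (Or.inr rfl)))
  rw [SimpleGraph.ncard_setOf_mem_edgeSet_of_iso_hasse_int F]
  convert odd_ncard_setOf_not_le_iff_of_bijective F.bijective hstep 0 using 4 with n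
  simp only [Sym2.eq_iff]
  constructor
  · rintro ⟨u, v, ⟨rfl, rfl⟩ | ⟨rfl, rfl⟩, hu, hv⟩ <;> omega
  · intro h
    rcases le_or_gt (F n) 0 with hn | hn
    · exact ⟨F n, F (n + 1), Or.inl ⟨rfl, rfl⟩, hn, by omega⟩
    · exact ⟨F (n + 1), F n, Or.inr ⟨rfl, rfl⟩, by omega, hn⟩

theorem stmt3 (S : Finset ℤ) (h0 : (0:ℤ) ∉ S) (hinv : ∀ s ∈ S, -s ∈ S)
    (H : SimpleGraph ℤ) (hH : IsHamPath (cay ↑S) H) :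
    Odd {e ∈ H.edgeSet | ∃ u v : ℤ, e = s(u, v) ∧ u ≤ 0 ∧ 1 ≤ v}.ncard :=
  stmt3_general S H hH
end

section
/- If Cay(ℤ, S) with S a finite nonempty inverse-closed set of nonzero integers admits a decomposition into |S⁺| edge-disjoint two-way-infinite Hamilton paths, then gcd(S) = 1 and the sum of the elements of S⁺ is congruent to |S⁺| modulo 2. -/
/-!
If `d` divides every element of `S`, each edge of `Cay(ℤ, S)` joins integers congruent modulo
`d`; a Hamilton path connects `0` to `1`, so `d = 1`.

For the parity, a connected 2-regular graph on the infinite set `ℤ` is a double ray: following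
darts and always leaving a vertex by the other edge enumerates it as a copy of the path `ℤ`.
Its edges have bounded length, so it crosses the cut between `0` and `1` only finitely often and
each of its ends eventually stays on one side. Both sides are infinite, so the two ends lie on
different sides and the number of crossings is odd. The cut of `Cay(ℤ, S)` has `∑ s ∈ S⁺, s`
edges, shared among the `|S⁺|` Hamilton paths.
-/

namespace SimpleGraph

variable {V : Type*} {H : SimpleGraph V}

lemma Reachable.mem_of_adj_mem {s : Set V} (hs : ∀ u v, H.Adj u v → u ∈ s → v ∈ s)
    {u v : V} (h : H.Reachable u v) (hu : u ∈ s) : v ∈ s := by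
  rw [reachable_iff_reflTransGen] at h
  induction h with
  | refl => exact hu
  | tail _ hadj ih => exact hs _ _ hadj ih

lemma exists_ne_and_neighborSet_eq {u v : V} (hdeg : (H.neighborSet v).ncard = 2)
    (hu : u ∈ H.neighborSet v) : ∃ w, w ≠ u ∧ H.neighborSet v = {u, w} := by
  obtain ⟨x, y, hxy, hs⟩ := Set.ncard_eq_two.1 hdeg
  rw [hs] at hu ⊢
  rcases hu with rfl | rfl
  · exact ⟨y, hxy.symm, rfl⟩
  · exact ⟨x, hxy, Set.pair_comm _ _⟩

section TwoRegular

variable (hdeg : ∀ v, (H.neighborSet v).ncard = 2)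

/-- The dart out of `d.fst` other than `d`. -/
noncomputable def Dart.turn (d : H.Dart) : H.Dart :=
  have h := exists_ne_and_neighborSet_eq (hdeg d.fst) d.adj
  ⟨(d.fst, h.choose), (Set.ext_iff.1 h.choose_spec.2 h.choose).2
    (Set.mem_insert_of_mem _ (Set.mem_singleton _))⟩

namespace Dart

lemma turn_fst (d : H.Dart) : (d.turn hdeg).fst = d.fst := rfl

lemma turn_snd_ne (d : H.Dart) : (d.turn hdeg).snd ≠ d.snd :=
  (exists_ne_and_neighborSet_eq (hdeg d.fst) d.adj).choose_spec.1

lemma neighborSet_fst_eq (d : H.Dart) : H.neighborSet d.fst = {d.snd, (d.turn hdeg).snd} :=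
  (exists_ne_and_neighborSet_eq (hdeg d.fst) d.adj).choose_spec.2

lemma eq_or_eq_turn_of_fst_eq {d d' : H.Dart} (h : d'.fst = d.fst) :
    d' = d ∨ d' = d.turn hdeg := by
  have hmem : d'.snd ∈ H.neighborSet d.fst := h ▸ d'.adj
  rw [neighborSet_fst_eq hdeg] at hmem
  rcases hmem with hs | hs
  · exact .inl (Dart.ext _ _ (Prod.ext h hs))
  · exact .inr (Dart.ext _ _ (Prod.ext h hs))

lemma turn_involutive : Function.Involutive (Dart.turn hdeg) := fun d =>
  ((eq_or_eq_turn_of_fst_eq hdeg (turn_fst hdeg d).symm).resolve_left fun h =>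
    turn_snd_ne hdeg d (congrArg (·.snd) h).symm).symm

end Dart

/-- Cross the dart `d` and leave its head by the other edge. -/
noncomputable def nextDart : Equiv.Perm H.Dart :=
  (Function.Involutive.toPerm _ Dart.symm_involutive).trans
    ((Dart.turn_involutive hdeg).toPerm _)

lemma nextDart_apply (d : H.Dart) : nextDart hdeg d = d.symm.turn hdeg := rfl

lemma nextDart_fst (d : H.Dart) : (nextDart hdeg d).fst = d.snd := rfl

lemma nextDart_ne_symm (d : H.Dart) : nextDart hdeg d ≠ d.symm := fun h =>
  Dart.turn_snd_ne hdeg d.symm (congrArg (·.snd) h)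

lemma symm_nextDart (d : H.Dart) : (nextDart hdeg d).symm = (nextDart hdeg)⁻¹ d.symm := by
  rw [Equiv.Perm.eq_inv_iff_eq, nextDart_apply, Dart.symm_symm, nextDart_apply,
    Dart.turn_involutive hdeg]

lemma symm_zpow_nextDart (k : ℤ) (d : H.Dart) :
    ((nextDart hdeg ^ k) d).symm = (nextDart hdeg ^ (-k)) d.symm := by
  have h : SemiconjBy (Function.Involutive.toPerm _ Dart.symm_involutive) (nextDart hdeg)
      (nextDart hdeg)⁻¹ := Equiv.ext (symm_nextDart hdeg)
  simpa [inv_zpow'] using congrArg (· d) (h.zpow_right k)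

lemma zpow_nextDart_apply_ne_symm (k : ℤ) (d : H.Dart) : (nextDart hdeg ^ k) d ≠ d.symm := by
  intro h
  obtain ⟨c, rfl | rfl⟩ := Int.even_or_odd' k
  · have : (nextDart hdeg ^ c) d = ((nextDart hdeg ^ c) d).symm := by
      rw [symm_zpow_nextDart, ← h, ← Equiv.Perm.mul_apply, ← zpow_add]
      ring_nf
    exact Dart.symm_ne _ this.symm
  · have : nextDart hdeg ((nextDart hdeg ^ c) d) = ((nextDart hdeg ^ c) d).symm := by
      rw [symm_zpow_nextDart, ← h, ← Equiv.Perm.mul_apply, ← Equiv.Perm.mul_apply,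
        ← zpow_one_add, ← zpow_add]
      ring_nf
    exact nextDart_ne_symm hdeg _ this

noncomputable def doubleRay (d : H.Dart) (m : ℤ) : V := ((nextDart hdeg ^ m) d).fst

lemma zpow_nextDart_apply_snd (d : H.Dart) (m : ℤ) :
    ((nextDart hdeg ^ m) d).snd = doubleRay hdeg d (m + 1) := by
  rw [doubleRay, add_comm, zpow_one_add, Equiv.Perm.mul_apply, nextDart_fst]

lemma doubleRay_adj (d : H.Dart) (m : ℤ) :
    H.Adj (doubleRay hdeg d m) (doubleRay hdeg d (m + 1)) := by
  rw [← zpow_nextDart_apply_snd]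
  exact Dart.adj _

lemma neighborSet_doubleRay (d : H.Dart) (m : ℤ) :
    H.neighborSet (doubleRay hdeg d m) = {doubleRay hdeg d (m - 1), doubleRay hdeg d (m + 1)} := by
  set y := (nextDart hdeg ^ (m - 1)) d
  have hy : nextDart hdeg y = (nextDart hdeg ^ m) d := by
    rw [← Equiv.Perm.mul_apply, ← zpow_one_add, add_sub_cancel]
  have := Dart.neighborSet_fst_eq hdeg y.symm
  rwa [Dart.symm_toProd, Prod.fst_swap, Prod.snd_swap, ← nextDart_apply, hy,
    zpow_nextDart_apply_snd, zpow_nextDart_apply_snd, sub_add_cancel] at this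

lemma doubleRay_surjective (hconn : H.Connected) (d : H.Dart) :
    Function.Surjective (doubleRay hdeg d) := by
  refine fun v => (hconn (doubleRay hdeg d 0) v).mem_of_adj_mem ?_ (Set.mem_range_self 0)
  rintro _ w hadj ⟨m, rfl⟩
  have hw : w ∈ H.neighborSet (doubleRay hdeg d m) := hadj
  rw [neighborSet_doubleRay] at hw
  rcases hw with rfl | rfl
  exacts [Set.mem_range_self _, Set.mem_range_self _]

lemma doubleRay_injective [Infinite V] (hconn : H.Connected) (d : H.Dart) :
    Function.Injective (doubleRay hdeg d) := by
  refine .of_lt_imp_ne fun i j hij heq => ?_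
  set x := (nextDart hdeg ^ i) d
  have hjx : (nextDart hdeg ^ j) d = (nextDart hdeg ^ (j - i)) x := by
    rw [← Equiv.Perm.mul_apply, ← zpow_add, sub_add_cancel]
  rcases Dart.eq_or_eq_turn_of_fst_eq hdeg heq.symm with hper | hrev
  · have hperiodic : Function.Periodic (doubleRay hdeg d) (j - i) := fun m => by
      simp only [doubleRay]
      rw [show m + (j - i) = (m - i) + j by ring, zpow_add, Equiv.Perm.mul_apply, hper,
        ← Equiv.Perm.mul_apply, ← zpow_add, sub_add_cancel]
    have hfin := (Set.finite_Ioc 0 (0 + (j - i))).image (doubleRay hdeg d)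
    rw [hperiodic.image_Ioc (sub_pos.2 hij), (doubleRay_surjective hdeg hconn d).range_eq] at hfin
    exact Set.infinite_univ hfin
  · -- the ray would come back to `x.fst` along `x` reversed
    have hturn : x.turn hdeg = nextDart hdeg x.symm := by rw [nextDart_apply, Dart.symm_symm]
    rw [hjx, hturn, show j - i = 1 + (j - i - 1) by ring, zpow_add, zpow_one,
      Equiv.Perm.mul_apply] at hrev
    exact zpow_nextDart_apply_ne_symm hdeg _ x ((nextDart hdeg).injective hrev)

end TwoRegular

lemma hasse_int_adj {a b : ℤ} : (hasse ℤ).Adj a b ↔ a + 1 = b ∨ b + 1 = a := by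
  rw [hasse_adj, Order.covBy_iff_add_one_eq, Order.covBy_iff_add_one_eq]

theorem nonempty_hasse_int_iso [Infinite V] (hconn : H.Connected)
    (hdeg : ∀ v, (H.neighborSet v).ncard = 2) : Nonempty (hasse ℤ ≃g H) := by
  obtain ⟨v⟩ := hconn.nonempty
  obtain ⟨w, hw⟩ := Set.nonempty_of_ncard_ne_zero (s := H.neighborSet v) (by rw [hdeg]; simp)
  let f := doubleRay hdeg ⟨(v, w), hw⟩
  have hf : f.Bijective := ⟨doubleRay_injective hdeg hconn _, doubleRay_surjective hdeg hconn _⟩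
  refine ⟨⟨Equiv.ofBijective f hf, fun {a b} => ?_⟩⟩
  rw [Equiv.ofBijective_apply, Equiv.ofBijective_apply, hasse_int_adj]
  constructor
  · intro hadj
    have hb : f b ∈ H.neighborSet (f a) := hadj
    rw [neighborSet_doubleRay] at hb
    rcases hb with hb | hb <;> have := hf.1 hb <;> omega
  · rintro (rfl | rfl)
    exacts [doubleRay_adj hdeg _ a, (doubleRay_adj hdeg _ b).symm]

end SimpleGraph

lemma odd_card_filter_Ico_iff (A : Set ℤ) [DecidablePred (· ∈ A)] {a b : ℤ} (hab : a ≤ b) :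
    Odd ((Finset.Ico a b).filter fun m => ¬(m ∈ A ↔ m + 1 ∈ A)).card ↔
      ¬(a ∈ A ↔ b ∈ A) := by
  induction b, hab using Int.leInduction with
  | base => simp
  | succ b hab ih =>
    rw [Finset.Ico_add_one_right_eq_Icc, ← Finset.Ico_insert_right hab, Finset.filter_insert]
    split_ifs with hb
    · rw [ih]
      tauto
    · rw [Finset.card_insert_of_notMem (by simp), Nat.odd_add_one, ih]
      tauto

/-- Far out on each side `A` is constant, with different values on the two sides. -/
lemma odd_ncard_boundary {A : Set ℤ} (hA : A.Infinite) (hAc : Aᶜ.Infinite)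
    (hfin : {m | ¬(m ∈ A ↔ m + 1 ∈ A)}.Finite) :
    Odd {m | ¬(m ∈ A ↔ m + 1 ∈ A)}.ncard := by
  classical
  obtain ⟨a, ha⟩ := hfin.bddBelow
  obtain ⟨c, hc⟩ := hfin.bddAbove
  set b := max a (c + 1)
  have hquiet : ∀ p q, p ≤ q → q ≤ a ∨ c < p → (p ∈ A ↔ q ∈ A) := by
    intro p q hpq hout
    by_contra hpq'
    obtain ⟨m, hm⟩ := Finset.card_pos.1 ((odd_card_filter_Ico_iff A hpq).2 hpq').pos
    rw [Finset.mem_filter, Finset.mem_Ico] at hm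
    have := ha hm.2
    have := hc hm.2
    omega
  have hab : ¬(a ∈ A ↔ b ∈ A) := by
    intro hab
    have hout : ∀ m ∉ Set.Ico a b, (m ∈ A ↔ a ∈ A) := by
      intro m hm
      rcases lt_or_ge m a with hma | hbm
      · exact hquiet m a hma.le (.inl le_rfl)
      · have hbm : b ≤ m := by simp only [Set.mem_Ico, not_and, not_lt] at hm; exact hm hbm
        exact (hab.trans (hquiet b m hbm (.inr (by omega)))).symm
    by_cases haA : a ∈ A
    · exact hAc ((Set.finite_Ico a b).subset fun m hm => by_contra fun h => hm ((hout m h).2 haA))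
    · exact hA ((Set.finite_Ico a b).subset fun m hm => by_contra fun h => haA ((hout m h).1 hm))
  have hboundary : {m | ¬(m ∈ A ↔ m + 1 ∈ A)}
      = ↑((Finset.Ico a b).filter fun m => ¬(m ∈ A ↔ m + 1 ∈ A)) := by
    ext m
    simp only [Set.mem_ofPred_eq, Finset.coe_filter, Finset.mem_Ico]
    refine ⟨fun hm => ⟨⟨ha hm, ?_⟩, hm⟩, fun hm => hm.2⟩
    have := hc hm
    omega
  rw [hboundary, Set.ncard_coe_finset]
  exact (odd_card_filter_Ico_iff A (le_max_left a _)).2 hab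

def crossingPairs (H : SimpleGraph ℤ) (n : ℤ) : Set (ℤ × ℤ) :=
  {p | H.Adj p.1 p.2 ∧ p.1 ≤ n ∧ n < p.2}

/-- Along a double ray through all of `ℤ`, the edges crossing a finite cut are the boundary
points of the set of positions on the left of the cut. -/
lemma odd_ncard_crossingPairs {H : SimpleGraph ℤ} (e : SimpleGraph.hasse ℤ ≃g H) {n : ℤ}
    (hfin : (crossingPairs H n).Finite) : Odd (crossingPairs H n).ncard := by
  set A := e ⁻¹' Set.Iic n
  let θ : ℤ → ℤ × ℤ := fun m => if e m ≤ n then (e m, e (m + 1)) else (e (m + 1), e m)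
  have hadj : ∀ m, H.Adj (e m) (e (m + 1)) := fun m =>
    e.map_adj_iff.2 (SimpleGraph.hasse_int_adj.2 (.inl rfl))
  have himage : θ '' {m | ¬(m ∈ A ↔ m + 1 ∈ A)} = crossingPairs H n := by
    ext ⟨u, v⟩
    constructor
    · rintro ⟨m, hm, hθ⟩
      simp only [Set.mem_ofPred_eq, A, Set.mem_preimage, Set.mem_Iic] at hm
      by_cases h : e m ≤ n
      · simp only [θ, if_pos h, Prod.mk.injEq] at hθ
        obtain ⟨rfl, rfl⟩ := hθ
        exact ⟨hadj m, h, not_le.1 fun h' => hm (iff_of_true h h')⟩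
      · simp only [θ, if_neg h, Prod.mk.injEq] at hθ
        obtain ⟨rfl, rfl⟩ := hθ
        exact ⟨(hadj m).symm, not_not.1 fun h' => hm (iff_of_false h h'), not_le.1 h⟩
    · rintro ⟨huv, hu, hv⟩
      obtain ⟨i, rfl⟩ := e.surjective u
      obtain ⟨j, rfl⟩ := e.surjective v
      rcases SimpleGraph.hasse_int_adj.1 (e.map_adj_iff.1 huv) with rfl | rfl
      · refine ⟨i, ?_, by simp [θ, hu]⟩
        simp [A, hu, hv]
      · refine ⟨j, ?_, by simp [θ, hv]⟩
        simp [A, hu, hv]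
  have hinj : Set.InjOn θ {m | ¬(m ∈ A ↔ m + 1 ∈ A)} := by
    intro m _ m' _ h
    simp only [θ] at h
    split_ifs at h <;> simp only [Prod.mk.injEq, e.injective.eq_iff] at h <;> omega
  have hA : A.Infinite := (Set.Iic_infinite n).preimage (by simp [e.surjective.range_eq])
  have hAc : Aᶜ.Infinite := by
    rw [← Set.preimage_compl, Set.compl_Iic]
    exact (Set.Ioi_infinite n).preimage (by simp [e.surjective.range_eq])
  rw [← himage, hinj.ncard_image]
  exact odd_ncard_boundary hA hAc (Set.Finite.of_finite_image (himage ▸ hfin) hinj)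

lemma dvd_sub_of_reachable_of_le_cay {S : Set ℤ} {d : ℤ} (hd : ∀ s ∈ S, d ∣ s)
    {H : SimpleGraph ℤ} (hle : H ≤ cay S) {u v : ℤ} (h : H.Reachable u v) : d ∣ v - u := by
  refine h.mem_of_adj_mem (s := {w | d ∣ w - u}) (fun w w' hadj hw => ?_) (by simp)
  have hww' : d ∣ w' - w := by
    rcases (hle hadj).2 with h | h
    exacts [dvd_sub_comm.1 (hd _ h), hd _ h]
  simpa using dvd_add hww' hw

lemma crossingPairs_mono {G H : SimpleGraph ℤ} (hle : H ≤ G) (n : ℤ) :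
    crossingPairs H n ⊆ crossingPairs G n :=
  fun _ ⟨hadj, hp⟩ => ⟨hle hadj, hp⟩

lemma ncard_crossingPairs_eq_sum {ι : Type*} [Fintype ι] {G : SimpleGraph ℤ}
    {D : ι → SimpleGraph ℤ} (hle : ∀ i, D i ≤ G)
    (hdisj : Pairwise fun i j => Disjoint (D i).edgeSet (D j).edgeSet)
    (hcover : ∀ e ∈ G.edgeSet, ∃ i, e ∈ (D i).edgeSet) {n : ℤ}
    (hfin : (crossingPairs G n).Finite) :
    (crossingPairs G n).ncard = ∑ i, (crossingPairs (D i) n).ncard := by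
  have hunion : crossingPairs G n = ⋃ i, crossingPairs (D i) n := by
    refine subset_antisymm (fun p ⟨hadj, hp⟩ => ?_)
      (Set.iUnion_subset fun i => crossingPairs_mono (hle i) n)
    obtain ⟨i, hi⟩ := hcover s(p.1, p.2) hadj
    exact Set.mem_iUnion.2 ⟨i, hi, hp⟩
  rw [hunion, Set.ncard_iUnion_of_finite (fun i => hfin.subset (crossingPairs_mono (hle i) n)),
    finsum_eq_sum_of_fintype]
  exact fun i j hij => Set.disjoint_left.2 fun p hpi hpj =>
    Set.disjoint_left.1 (hdisj hij) ((SimpleGraph.mem_edgeSet _).2 hpi.1) hpj.1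

lemma crossingPairs_cay_eq_image {S : Finset ℤ} (hinv : ∀ s ∈ S, -s ∈ S) (n : ℤ) :
    crossingPairs (cay ↑S) n = (fun q : (_ : ℤ) × ℤ => (q.2, q.2 + q.1)) ''
      ↑({s ∈ S | 0 < s}.sigma fun s => Finset.Ioc (n - s) n) := by
  ext ⟨u, v⟩
  simp only [crossingPairs, cay, Set.mem_ofPred_eq, Set.mem_image, Finset.coe_sigma,
    Set.mem_sigma_iff, Finset.coe_filter, Finset.coe_Ioc, Set.mem_Ioc, Finset.mem_coe,
    Prod.mk.injEq, Sigma.exists]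
  constructor
  · rintro ⟨⟨-, huv⟩, hu, hv⟩
    refine ⟨v - u, u, ⟨⟨?_, by omega⟩, by omega, hu⟩, rfl, by ring⟩
    rcases huv with h | h
    · simpa using hinv _ h
    · exact h
  · rintro ⟨s, w, ⟨⟨hs, hs0⟩, hw⟩, rfl, rfl⟩
    exact ⟨⟨by omega, .inr (by simpa using hs)⟩, hw.2, by omega⟩

lemma ncard_crossingPairs_cay {S : Finset ℤ} (hinv : ∀ s ∈ S, -s ∈ S) (n : ℤ) :
    ((crossingPairs (cay ↑S) n).ncard : ℤ) = ∑ s ∈ S with 0 < s, s := by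
  rw [crossingPairs_cay_eq_image hinv, Set.ncard_image_of_injective, Set.ncard_coe_finset,
    Finset.card_sigma, Nat.cast_sum]
  · refine Finset.sum_congr rfl fun s hs => ?_
    rw [Int.card_Ioc, sub_sub_cancel, Int.toNat_of_nonneg (Finset.mem_filter.1 hs).2.le]
  · rintro ⟨s, w⟩ ⟨s', w'⟩ h
    simp only [Prod.mk.injEq] at h
    obtain ⟨rfl, h⟩ := h
    rw [add_left_cancel h]

theorem stmt4 (S : Finset ℤ) (hne : S.Nonempty) (h0 : (0:ℤ) ∉ S)
    (hinv : ∀ s ∈ S, -s ∈ S)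
    (h : HamDecomp (cay ↑S) (S.filter fun a => 0 < a).card) :
    (∀ d : ℕ, (∀ s ∈ S, (d : ℤ) ∣ s) → d = 1) ∧
    (S.filter fun a => 0 < a).sum id % 2 = ((S.filter fun a => 0 < a).card : ℤ) % 2 := by
  obtain ⟨D, hD, hdisj, hcover⟩ := h
  constructor
  · intro d hd
    obtain ⟨s, hs⟩ := hne
    have h0s : (cay ↑S).Adj 0 s := ⟨fun h => h0 (h ▸ hs), .inr (by simpa using hs)⟩
    obtain ⟨i, -⟩ := hcover s(0, s) h0s
    have h01 : (d : ℤ) ∣ 1 := by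
      simpa using dvd_sub_of_reachable_of_le_cay hd (hD i).1 ((hD i).2.1 0 1)
    exact_mod_cast Int.eq_one_of_dvd_one (by positivity) h01
  · have hfin : (crossingPairs (cay ↑S) 0).Finite := by
      rw [crossingPairs_cay_eq_image hinv]
      exact (Finset.finite_toSet _).image _
    have hodd : ∀ i, Odd (crossingPairs (D i) 0).ncard := fun i =>
      have ⟨e⟩ := SimpleGraph.nonempty_hasse_int_iso (hD i).2.1 (hD i).2.2
      odd_ncard_crossingPairs e (hfin.subset (crossingPairs_mono (hD i).1 0))
    refine (ZMod.intCast_eq_intCast_iff' _ _ 2).1 ?_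
    change ((∑ s ∈ S with 0 < s, s : ℤ) : ZMod 2) = _
    rw [← ncard_crossingPairs_cay hinv 0,
      ncard_crossingPairs_eq_sum (fun i => (hD i).1) hdisj hcover hfin]
    simp [ZMod.natCast_eq_one_iff_odd.2 (hodd _)]
end

section
/- The graph Cay(ℤ, {±1, ±2}) does not admit a decomposition into 2 edge-disjoint two-way-infinite Hamilton paths. -/
/-!
Let `c_H(n)` count the edges of `H` between `(-∞, n]` and `[n + 1, ∞)`. For a spanning 2-regular
`H ≤ Cay(ℤ, {±1, ±2})`, double counting the edges at `n + 1` gives `c_H(n) + c_H(n + 1) ≡ 0 (mod 2)`,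
so `c_H` has constant parity. For a Hamilton path it is odd: otherwise `c_H ≡ 2` (it is positive by
connectedness and at most 3), which forces all edges `n ~ n + 2`, hence no edge of length 1, and `H`
never leaves the even integers. But the whole graph has exactly 3 edges across every cut, and 3 is
not a sum of two odd numbers.
-/

open SimpleGraph

lemma SimpleGraph.Connected.exists_adj_mem_not_mem {V : Type*} {G : SimpleGraph V}
    (hG : G.Connected) {S : Set V} {u v : V} (hu : u ∈ S) (hv : v ∉ S) :
    ∃ x y, G.Adj x y ∧ x ∈ S ∧ y ∉ S := by
  obtain ⟨d, -, hd⟩ := (hG u v).some.exists_boundary_dart S hu hv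
  exact ⟨d.fst, d.snd, d.adj, hd⟩

open Classical in
noncomputable def adjInd {V : Type*} (H : SimpleGraph V) (u v : V) : ℕ :=
  if H.Adj u v then 1 else 0

section adjInd

variable {V : Type*} {H : SimpleGraph V} {u v : V}

lemma adjInd_comm : adjInd H u v = adjInd H v u := by
  unfold adjInd; rw [H.adj_comm]

lemma adjInd_le_one : adjInd H u v ≤ 1 := by
  unfold adjInd; split <;> omega

@[simp]
lemma adjInd_eq_one_iff : adjInd H u v = 1 ↔ H.Adj u v := by
  unfold adjInd; split <;> simp_all

@[simp]
lemma adjInd_eq_zero_iff : adjInd H u v = 0 ↔ ¬ H.Adj u v := by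
  unfold adjInd; split <;> simp_all

lemma ncard_neighborSet_eq_sum_adjInd {s : Finset V} (hs : H.neighborSet v ⊆ s) :
    (H.neighborSet v).ncard = ∑ u ∈ s, adjInd H v u := by
  classical
  have hset : H.neighborSet v = ↑(s.filter (H.Adj v)) := by
    ext u
    simp only [Finset.coe_filter, Set.mem_ofPred_eq, mem_neighborSet]
    exact ⟨fun h => ⟨hs h, h⟩, And.right⟩
  rw [hset, Set.ncard_coe_finset, Finset.card_filter]
  simp only [adjInd]

lemma adjInd_add_adjInd_eq_one {G H₁ H₂ : SimpleGraph V}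
    (hdisj : Disjoint H₁.edgeSet H₂.edgeSet)
    (hcov : ∀ e ∈ G.edgeSet, e ∈ H₁.edgeSet ∨ e ∈ H₂.edgeSet) (h : G.Adj u v) :
    adjInd H₁ u v + adjInd H₂ u v = 1 := by
  have hne : ¬ (H₁.Adj u v ∧ H₂.Adj u v) := fun ⟨h₁, h₂⟩ =>
    Set.disjoint_left.1 hdisj (H₁.mem_edgeSet.2 h₁) (H₂.mem_edgeSet.2 h₂)
  rcases hcov s(u, v) (G.mem_edgeSet.2 h) with h₁ | h₂
  · rw [adjInd_eq_one_iff.2 h₁, adjInd_eq_zero_iff.2 fun h₂ => hne ⟨h₁, h₂⟩]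
  · rw [adjInd_eq_one_iff.2 h₂, adjInd_eq_zero_iff.2 fun h₁ => hne ⟨h₁, h₂⟩]

end adjInd

lemma cay_one_two_adj {u v : ℤ} :
    (cay {1, 2}).Adj u v ↔ v - u = 1 ∨ v - u = 2 ∨ u - v = 1 ∨ u - v = 2 := by
  simp only [cay, Set.mem_insert_iff, Set.mem_singleton_iff]
  omega

section crossingNumber

/-- For `H ≤ cay {1, 2}` these are the only possible edges between `(-∞, n]` and `[n + 1, ∞)`. -/
noncomputable def crossingNumber (H : SimpleGraph ℤ) (n : ℤ) : ℕ :=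
  adjInd H n (n + 1) + adjInd H (n - 1) (n + 1) + adjInd H n (n + 2)

variable {H : SimpleGraph ℤ}

lemma crossingNumber_le_three (n : ℤ) : crossingNumber H n ≤ 3 := by
  have := @adjInd_le_one _ H n (n + 1)
  have := @adjInd_le_one _ H (n - 1) (n + 1)
  have := @adjInd_le_one _ H n (n + 2)
  unfold crossingNumber; omega

lemma crossingNumber_pos (hle : H ≤ cay {1, 2}) (hconn : H.Connected) (n : ℤ) :
    0 < crossingNumber H n := by
  obtain ⟨u, v, huv, hu, hv⟩ :=
    hconn.exists_adj_mem_not_mem (S := Set.Iic n) (v := n + 1) Set.self_mem_Iic (by simp)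
  simp only [Set.mem_Iic, not_le] at hu hv
  have hd := cay_one_two_adj.1 (hle huv)
  have key : H.Adj n (n + 1) ∨ H.Adj (n - 1) (n + 1) ∨ H.Adj n (n + 2) := by
    rcases (show (u = n ∧ v = n + 1) ∨ (u = n - 1 ∧ v = n + 1) ∨ (u = n ∧ v = n + 2) by omega)
      with ⟨rfl, rfl⟩ | ⟨rfl, rfl⟩ | ⟨rfl, rfl⟩ <;> simp [huv]
  unfold crossingNumber
  rcases key with h | h | h <;> have := adjInd_eq_one_iff.2 h <;> omega

lemma adjInd_sum_eq_two (hle : H ≤ cay {1, 2}) {v : ℤ} (hdeg : (H.neighborSet v).ncard = 2) :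
    adjInd H (v - 2) v + adjInd H (v - 1) v + adjInd H v (v + 1) + adjInd H v (v + 2) = 2 := by
  have hsub : H.neighborSet v ⊆ ↑({v - 2, v - 1, v + 1, v + 2} : Finset ℤ) := fun u hu => by
    have := cay_one_two_adj.1 (hle hu)
    simp only [Finset.coe_insert, Finset.coe_singleton, Set.mem_insert_iff,
      Set.mem_singleton_iff]
    omega
  rw [ncard_neighborSet_eq_sum_adjInd hsub,
    Finset.sum_insert (by simp only [Finset.mem_insert, Finset.mem_singleton]; omega),
    Finset.sum_insert (by simp only [Finset.mem_insert, Finset.mem_singleton]; omega),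
    Finset.sum_insert (by simp only [Finset.mem_singleton]; omega), Finset.sum_singleton] at hdeg
  rw [adjInd_comm (u := v - 2), adjInd_comm (u := v - 1)]
  omega

lemma crossingNumber_add_crossingNumber_add_one (hle : H ≤ cay {1, 2})
    (hdeg : ∀ v, (H.neighborSet v).ncard = 2) (n : ℤ) :
    crossingNumber H n + crossingNumber H (n + 1) = 2 + 2 * adjInd H n (n + 2) := by
  have h := adjInd_sum_eq_two hle (hdeg (n + 1))
  unfold crossingNumber
  simp only [show n + 1 - 2 = n - 1 by ring, show n + 1 - 1 = n by ring,
    show n + 1 + 1 = n + 2 by ring, show n + 1 + 2 = n + 3 by ring] at h ⊢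
  omega

lemma crossingNumber_mod_two (hle : H ≤ cay {1, 2}) (hdeg : ∀ v, (H.neighborSet v).ncard = 2)
    (n : ℤ) : crossingNumber H n % 2 = crossingNumber H 0 % 2 := by
  have step (m : ℤ) : crossingNumber H (m + 1) % 2 = crossingNumber H m % 2 := by
    have := crossingNumber_add_crossingNumber_add_one hle hdeg m
    omega
  induction n using Int.induction_on with
  | zero => rfl
  | succ k ih => rw [step, ih]
  | pred k ih => rw [← ih, ← step (-k - 1), sub_add_cancel]

lemma not_connected_of_forall_adj_even (h : ∀ u v, H.Adj u v → Even (u - v)) : ¬ H.Connected :=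
  fun hconn => by
    obtain ⟨u, v, huv, hu, hv⟩ :=
      hconn.exists_adj_mem_not_mem (S := {x | Even x}) (u := 0) (v := 1) Even.zero Int.not_even_one
    exact hv ((Int.even_sub.1 (h u v huv)).1 hu)

lemma IsHamPath.odd_crossingNumber (hH : IsHamPath (cay {1, 2}) H) (n : ℤ) :
    Odd (crossingNumber H n) := by
  obtain ⟨hle, hconn, hdeg⟩ := hH
  rw [Nat.odd_iff, crossingNumber_mod_two hle hdeg]
  by_contra heven
  have hc2 (m : ℤ) : crossingNumber H m = 2 := by
    have := crossingNumber_mod_two hle hdeg m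
    have := crossingNumber_le_three (H := H) m
    have := crossingNumber_pos hle hconn m
    omega
  have hlong (m : ℤ) : H.Adj m (m + 2) := by
    have := crossingNumber_add_crossingNumber_add_one hle hdeg m
    rw [hc2, hc2] at this
    exact adjInd_eq_one_iff.1 (by omega)
  have hshort (m : ℤ) : ¬ H.Adj m (m + 1) := by
    have := adjInd_sum_eq_two hle (hdeg m)
    have h₁ := adjInd_eq_one_iff.2 (hlong m)
    have h₂ := adjInd_eq_one_iff.2 (hlong (m - 2))
    rw [sub_add_cancel] at h₂
    exact adjInd_eq_zero_iff.1 (by omega)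
  refine not_connected_of_forall_adj_even (fun u v huv => ?_) hconn
  rw [Int.even_iff]
  rcases cay_one_two_adj.1 (hle huv) with h | h | h | h
  · exact (hshort u (by rwa [show v = u + 1 by omega] at huv)).elim
  · omega
  · exact (hshort v (by rw [show u = v + 1 by omega] at huv; exact huv.symm)).elim
  · omega

lemma crossingNumber_add_crossingNumber_eq_three {H₁ H₂ : SimpleGraph ℤ}
    (hdisj : Disjoint H₁.edgeSet H₂.edgeSet)
    (hcov : ∀ e ∈ (cay {1, 2}).edgeSet, e ∈ H₁.edgeSet ∨ e ∈ H₂.edgeSet) (n : ℤ) :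
    crossingNumber H₁ n + crossingNumber H₂ n = 3 := by
  have split {u v : ℤ} (h : (cay {1, 2}).Adj u v) := adjInd_add_adjInd_eq_one hdisj hcov h
  have := split (u := n) (v := n + 1) (cay_one_two_adj.2 (by omega))
  have := split (u := n - 1) (v := n + 1) (cay_one_two_adj.2 (by omega))
  have := split (u := n) (v := n + 2) (cay_one_two_adj.2 (by omega))
  unfold crossingNumber
  omega

end crossingNumber

theorem stmt5 : ¬ HamDecomp (cay ({1, 2} : Set ℤ)) 2 := by
  rintro ⟨D, hham, hdisj, hcov⟩
  have h3 := crossingNumber_add_crossingNumber_eq_three (hdisj 0 1 (by decide))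
    (fun e he => by simpa only [Fin.exists_fin_two] using hcov e he) 0
  have h₀ := Nat.odd_iff.1 ((hham 0).odd_crossingNumber 0)
  have h₁ := Nat.odd_iff.1 ((hham 1).odd_crossingNumber 0)
  omega
end

section
/- If a and b are distinct odd positive integers with gcd(a, b) = 1, then Cay(ℤ, {±a, ±b}) admits a decomposition into 2 edge-disjoint two-way-infinite Hamilton paths. -/
/-!
Write `n = a + b`. The zigzag walk repeats, with period `2n` in time and displacement `2n`, the
pattern: `n` steps `+a`, one step `+b`, `n - 2` steps `-a`, one step `+b`. Modulo `2n` its `k`-th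
vertex is `J(k) * a` for an involution `J` of `[0, 2n)`; since `a` is odd and coprime to `b`, it
is a unit modulo `2n`, so the walk visits every integer exactly once. It omits exactly the edges
`{u, u + a}` with `u ≡ n` or `u ≡ -a`, and uses exactly the edges `{u, u + b}` with `u ≡ n` or
`u ≡ -b` (mod `2n`). The same walk with `a` and `b` exchanged therefore uses precisely the
remaining edges.
-/

open Function

section TraceGraph

variable {V : Type*} {f : ℤ → V}

def traceGraph (f : ℤ → V) : SimpleGraph V :=
  SimpleGraph.fromRel fun u v => ∃ k, f k = u ∧ f (k + 1) = v

lemma traceGraph_neighborSet (hf : Injective f) (k : ℤ) :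
    (traceGraph f).neighborSet (f k) = {f (k - 1), f (k + 1)} := by
  ext v
  simp only [SimpleGraph.mem_neighborSet, traceGraph, SimpleGraph.fromRel_adj,
    Set.mem_insert_iff, Set.mem_singleton_iff]
  constructor
  · rintro ⟨-, ⟨m, hm, rfl⟩ | ⟨m, rfl, hm⟩⟩
    · rw [hf hm]; exact Or.inr rfl
    · rw [← hf hm, add_sub_cancel_right]; exact Or.inl rfl
  · rintro (rfl | rfl)
    · exact ⟨hf.ne (by omega), Or.inr ⟨k - 1, rfl, by rw [sub_add_cancel]⟩⟩
    · exact ⟨hf.ne (by omega), Or.inl ⟨k, rfl, rfl⟩⟩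

lemma ncard_neighborSet_traceGraph (hf : Bijective f) (v : V) :
    ((traceGraph f).neighborSet v).ncard = 2 := by
  obtain ⟨k, rfl⟩ := hf.2 v
  rw [traceGraph_neighborSet hf.1, Set.ncard_pair (hf.1.ne (by omega))]

lemma traceGraph_connected (hf : Surjective f) : (traceGraph f).Connected := by
  have hstep : ∀ k, (traceGraph f).Reachable (f k) (f (k + 1)) := fun k => by
    by_cases h : f k = f (k + 1)
    · rw [h]
    · exact SimpleGraph.Adj.reachable ⟨h, Or.inl ⟨k, rfl, rfl⟩⟩
  have hreach : ∀ k, (traceGraph f).Reachable (f 0) (f k) := by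
    intro k
    induction k using Int.induction_on with
    | zero => rfl
    | succ i ih => exact ih.trans (hstep i)
    | pred i ih => exact ih.trans (by simpa using (hstep (-i - 1)).symm)
  have : Nonempty V := ⟨f 0⟩
  refine (SimpleGraph.connected_iff_exists_forall_reachable _).2 ⟨f 0, fun v => ?_⟩
  obtain ⟨k, rfl⟩ := hf v
  exact hreach k

lemma traceGraph_adj_add_iff {f : ℤ → ℤ} (hf : Injective f) (k d : ℤ) :
    (traceGraph f).Adj (f k) (f k + d) ↔ f (k + 1) - f k = d ∨ f (k - 1) - f k = d := by
  rw [← SimpleGraph.mem_neighborSet, traceGraph_neighborSet hf, Set.mem_insert_iff,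
    Set.mem_singleton_iff]
  omega

lemma traceGraph_le_cay {f : ℤ → ℤ} {S : Set ℤ}
    (h : ∀ k, f (k + 1) - f k ∈ S ∨ f k - f (k + 1) ∈ S) : traceGraph f ≤ cay S := by
  rintro u v ⟨huv, ⟨k, rfl, rfl⟩ | ⟨k, rfl, rfl⟩⟩
  · exact ⟨huv, (h k).symm⟩
  · exact ⟨huv, h k⟩

lemma isHamPath_traceGraph {G : SimpleGraph ℤ} {f : ℤ → ℤ} (hf : Bijective f)
    (hG : traceGraph f ≤ G) : IsHamPath G (traceGraph f) :=
  ⟨hG, traceGraph_connected hf.2, ncard_neighborSet_traceGraph hf⟩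

end TraceGraph

lemma hamDecomp_two_of_adj_add_iff {S : Set ℤ} {P Q : SimpleGraph ℤ}
    (hP : IsHamPath (cay S) P) (hQ : IsHamPath (cay S) Q)
    (hPQ : ∀ u, ∀ d ∈ S, P.Adj u (u + d) ↔ ¬Q.Adj u (u + d)) :
    HamDecomp (cay S) 2 := by
  have hedge : ∀ e ∈ (cay S).edgeSet, ∃ u, ∃ d ∈ S, e = s(u, u + d) := by
    rintro ⟨u, v⟩ ⟨-, huv | hvu⟩
    · exact ⟨v, u - v, huv, by rw [add_sub_cancel, Sym2.eq_swap]⟩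
    · exact ⟨u, v - u, hvu, by rw [add_sub_cancel]⟩
  have hdisj : Disjoint P.edgeSet Q.edgeSet := Set.disjoint_left.2 fun e heP heQ => by
    obtain ⟨u, d, hd, rfl⟩ := hedge e (SimpleGraph.edgeSet_subset_edgeSet.2 hP.1 heP)
    exact (hPQ u d hd).1 heP heQ
  refine ⟨![P, Q], fun i => ?_, fun i j hij => ?_, fun e he => ?_⟩
  · fin_cases i
    exacts [hP, hQ]
  · fin_cases i <;> fin_cases j
    exacts [absurd rfl hij, hdisj, hdisj.symm, absurd rfl hij]
  · obtain ⟨u, d, hd, rfl⟩ := hedge e he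
    by_cases h : P.Adj u (u + d)
    · exact ⟨0, h⟩
    · exact ⟨1, not_not.1 (mt (hPQ u d hd).2 h)⟩

section ExtendPeriodic

variable {N : ℤ} {p : ℤ → ℤ}

def extendPeriodic (N : ℤ) (p : ℤ → ℤ) (k : ℤ) : ℤ := N * (k / N) + p (k % N)

lemma extendPeriodic_mul_add (hN : 0 < N) (q : ℤ) {r : ℤ} (hr₀ : 0 ≤ r) (hr : r < N) :
    extendPeriodic N p (N * q + r) = N * q + p r := by
  rw [extendPeriodic, add_comm (N * q), Int.add_mul_ediv_left _ _ hN.ne',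
    Int.add_mul_emod_self_left, Int.ediv_eq_zero_of_lt hr₀ hr, Int.emod_eq_of_lt hr₀ hr,
    zero_add]

lemma extendPeriodic_add_one_sub (hN : 0 < N) (k : ℤ) :
    extendPeriodic N p (k + 1) - extendPeriodic N p k =
      if k % N + 1 < N then p (k % N + 1) - p (k % N) else N + p 0 - p (k % N) := by
  have hr₀ := Int.emod_nonneg k hN.ne'
  have hr := Int.emod_lt_of_pos k hN
  conv_lhs => rw [← Int.mul_ediv_add_emod k N]
  split_ifs with h
  · rw [add_assoc, extendPeriodic_mul_add hN _ (by omega) h, extendPeriodic_mul_add hN _ hr₀ hr]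
    ring
  · rw [show N * (k / N) + k % N + 1 = N * (k / N + 1) + 0 by rw [mul_add]; omega,
      extendPeriodic_mul_add hN _ le_rfl hN, extendPeriodic_mul_add hN _ hr₀ hr]
    ring

lemma extendPeriodic_modEq (k : ℤ) : extendPeriodic N p k ≡ p (k % N) [ZMOD N] :=
  Int.modEq_iff_dvd.2 ⟨-(k / N), by rw [extendPeriodic]; ring⟩

lemma extendPeriodic_modEq_iff (hN : 0 < N)
    (hp : ∀ r r', 0 ≤ r → r < N → 0 ≤ r' → r' < N → p r ≡ p r' [ZMOD N] → r = r')
    (k : ℤ) {r : ℤ} (hr₀ : 0 ≤ r) (hr : r < N) :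
    extendPeriodic N p k ≡ p r [ZMOD N] ↔ k % N = r := by
  refine ⟨fun h => ?_, fun h => h ▸ extendPeriodic_modEq k⟩
  exact hp _ _ (Int.emod_nonneg k hN.ne') (Int.emod_lt_of_pos k hN) hr₀ hr
    ((extendPeriodic_modEq k).symm.trans h)

lemma bijective_extendPeriodic (hN : 0 < N)
    (hp : ∀ r r', 0 ≤ r → r < N → 0 ≤ r' → r' < N → p r ≡ p r' [ZMOD N] → r = r')
    (hp' : ∀ v, ∃ r, 0 ≤ r ∧ r < N ∧ p r ≡ v [ZMOD N]) :
    Bijective (extendPeriodic N p) := by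
  refine ⟨fun k k' h => ?_, fun v => ?_⟩
  · have hr : k % N = k' % N :=
      (extendPeriodic_modEq_iff hN hp k (Int.emod_nonneg k' hN.ne') (Int.emod_lt_of_pos k' hN)).1
        (h ▸ extendPeriodic_modEq k')
    have hq : k / N = k' / N := by
      rw [extendPeriodic, extendPeriodic, hr] at h
      exact mul_left_cancel₀ hN.ne' (add_right_cancel h)
    rw [← Int.mul_ediv_add_emod k N, ← Int.mul_ediv_add_emod k' N, hq, hr]
  · obtain ⟨r, hr₀, hr, hv⟩ := hp' v
    obtain ⟨q, hq⟩ := hv.dvd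
    exact ⟨N * q + r, by rw [extendPeriodic_mul_add hN q hr₀ hr, ← hq]; ring⟩

end ExtendPeriodic

lemma Int.sub_one_emod_eq_ite {N : ℤ} (hN : 0 < N) (k : ℤ) :
    (k - 1) % N = if k % N = 0 then N - 1 else k % N - 1 := by
  have hr₀ := Int.emod_nonneg k hN.ne'
  have hr := Int.emod_lt_of_pos k hN
  conv_lhs => rw [← Int.emod_add_mul_ediv k N]
  rw [show k % N + N * (k / N) - 1 = k % N - 1 + N * (k / N) by ring, Int.add_mul_emod_self_left]
  split_ifs with h
  · rw [h, show (0 : ℤ) - 1 = N - 1 + N * (-1) by ring, Int.add_mul_emod_self_left,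
      Int.emod_eq_of_lt (by omega) (by omega)]
  · exact Int.emod_eq_of_lt (by omega) (by omega)

section Zigzag

variable {a b : ℤ}

def zigzagProfile (a b r : ℤ) : ℤ :=
  if r ≤ a + b then r * a else (2 * (a + b) + 1 - r) * a + b

def zigzag (a b : ℤ) : ℤ → ℤ := extendPeriodic (2 * (a + b)) (zigzagProfile a b)

def zigzagStep (a b r : ℤ) : ℤ :=
  if r < a + b then a else if r = a + b ∨ r = 2 * (a + b) - 1 then b else -a

lemma zigzag_add_one_sub (ha : 0 < a) (hb : 0 < b) (k : ℤ) :
    zigzag a b (k + 1) - zigzag a b k = zigzagStep a b (k % (2 * (a + b))) := by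
  have hN : 0 < 2 * (a + b) := by omega
  have hr₀ := Int.emod_nonneg k hN.ne'
  have hr := Int.emod_lt_of_pos k hN
  rw [zigzag, extendPeriodic_add_one_sub hN]
  generalize k % (2 * (a + b)) = r at hr₀ hr ⊢
  rcases (by omega : r < a + b ∨ r = a + b ∨ a + b < r ∧ r < 2 * (a + b) - 1 ∨
    r = 2 * (a + b) - 1) with h | rfl | h | rfl
  all_goals
    simp only [zigzagProfile, zigzagStep, true_or, or_true, ↓reduceIte]
    split_ifs <;> first | omega | ring1

lemma zigzag_sub_one_sub (ha : 0 < a) (hb : 0 < b) (k : ℤ) :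
    zigzag a b (k - 1) - zigzag a b k = -zigzagStep a b
      (if k % (2 * (a + b)) = 0 then 2 * (a + b) - 1 else k % (2 * (a + b)) - 1) := by
  rw [← Int.sub_one_emod_eq_ite (by omega), ← zigzag_add_one_sub ha hb, sub_add_cancel, neg_sub]

lemma zigzag_le_cay (ha : 0 < a) (hb : 0 < b) : traceGraph (zigzag a b) ≤ cay {a, b} := by
  refine traceGraph_le_cay fun k => ?_
  have h := zigzag_add_one_sub ha hb k
  simp only [zigzagStep] at h
  simp only [Set.mem_insert_iff, Set.mem_singleton_iff]
  split_ifs at h <;> omega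

def zigzagIndex (a b r : ℤ) : ℤ := if r ≤ a + b then r else 3 * (a + b) - r

lemma zigzagIndex_nonneg {r : ℤ} (hr₀ : 0 ≤ r) (hr : r < 2 * (a + b)) :
    0 ≤ zigzagIndex a b r := by
  unfold zigzagIndex; split_ifs <;> omega

lemma zigzagIndex_lt {r : ℤ} (hr : r < 2 * (a + b)) :
    zigzagIndex a b r < 2 * (a + b) := by
  unfold zigzagIndex; split_ifs <;> omega

lemma zigzagIndex_zigzagIndex {r : ℤ} (hr : r < 2 * (a + b)) :
    zigzagIndex a b (zigzagIndex a b r) = r := by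
  unfold zigzagIndex; split_ifs <;> omega

lemma zigzagProfile_modEq (hodd : Odd a) (r : ℤ) :
    zigzagProfile a b r ≡ zigzagIndex a b r * a [ZMOD 2 * (a + b)] := by
  obtain ⟨m, hm⟩ := hodd
  unfold zigzagProfile zigzagIndex
  split_ifs
  · rfl
  · exact Int.modEq_iff_dvd.2 ⟨m, by rw [hm]; ring⟩

lemma isCoprime_two_mul_add (hodd : Odd a) (hcop : IsCoprime a b) : IsCoprime a (2 * (a + b)) :=
  (Int.isCoprime_two_right.2 hodd).mul_right (by simpa [add_comm] using hcop.add_mul_left_right 1)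

lemma zigzagProfile_eq_of_modEq (hodd : Odd a) (hcop : IsCoprime a b) (r r' : ℤ)
    (hr₀ : 0 ≤ r) (hr : r < 2 * (a + b)) (hr₀' : 0 ≤ r') (hr' : r' < 2 * (a + b))
    (h : zigzagProfile a b r ≡ zigzagProfile a b r' [ZMOD 2 * (a + b)]) : r = r' := by
  have hN : 0 < 2 * (a + b) := by omega
  have hmul : zigzagIndex a b r * a ≡ zigzagIndex a b r' * a [ZMOD 2 * (a + b)] :=
    ((zigzagProfile_modEq hodd r).symm.trans h).trans (zigzagProfile_modEq hodd r')
  have hidx : zigzagIndex a b r ≡ zigzagIndex a b r' [ZMOD 2 * (a + b)] := by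
    simpa [Int.isCoprime_iff_gcd_eq_one.1 (isCoprime_two_mul_add hodd hcop).symm]
      using hmul.cancel_right_div_gcd hN
  have heq : zigzagIndex a b r = zigzagIndex a b r' := by
    rwa [Int.ModEq, Int.emod_eq_of_lt (zigzagIndex_nonneg hr₀ hr) (zigzagIndex_lt hr),
      Int.emod_eq_of_lt (zigzagIndex_nonneg hr₀' hr') (zigzagIndex_lt hr')] at hidx
  rw [← zigzagIndex_zigzagIndex hr, heq, zigzagIndex_zigzagIndex hr']

lemma exists_zigzagProfile_modEq (ha : 0 < a) (hb : 0 < b) (hodd : Odd a) (hcop : IsCoprime a b)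
    (v : ℤ) :
    ∃ r, 0 ≤ r ∧ r < 2 * (a + b) ∧ zigzagProfile a b r ≡ v [ZMOD 2 * (a + b)] := by
  have hN : 0 < 2 * (a + b) := by omega
  obtain ⟨s, t, hst⟩ := isCoprime_two_mul_add hodd hcop
  have hv : s * v * a ≡ v [ZMOD 2 * (a + b)] :=
    Int.modEq_iff_dvd.2 ⟨t * v, by linear_combination -v * hst⟩
  have hr₀ := Int.emod_nonneg (s * v) hN.ne'
  have hr := Int.emod_lt_of_pos (s * v) hN
  refine ⟨zigzagIndex a b (s * v % (2 * (a + b))), zigzagIndex_nonneg hr₀ hr,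
    zigzagIndex_lt hr, ?_⟩
  calc zigzagProfile a b (zigzagIndex a b (s * v % (2 * (a + b))))
      ≡ s * v % (2 * (a + b)) * a [ZMOD 2 * (a + b)] := by
        simpa only [zigzagIndex_zigzagIndex hr] using
          zigzagProfile_modEq (b := b) hodd (zigzagIndex a b (s * v % (2 * (a + b))))
    _ ≡ s * v * a [ZMOD 2 * (a + b)] := (Int.mod_modEq _ _).mul_right a
    _ ≡ v [ZMOD 2 * (a + b)] := hv

lemma bijective_zigzag (ha : 0 < a) (hb : 0 < b) (hodd : Odd a) (hcop : IsCoprime a b) :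
    Bijective (zigzag a b) :=
  bijective_extendPeriodic (by omega)
    (zigzagProfile_eq_of_modEq hodd hcop)
    (exists_zigzagProfile_modEq ha hb hodd hcop)

lemma isHamPath_zigzag (ha : 0 < a) (hb : 0 < b) (hodd : Odd a) (hcop : IsCoprime a b) :
    IsHamPath (cay {a, b}) (traceGraph (zigzag a b)) :=
  isHamPath_traceGraph (bijective_zigzag ha hb hodd hcop) (zigzag_le_cay ha hb)

lemma zigzag_modEq_iff (ha : 0 < a) (hb : 0 < b) (hodd : Odd a) (hcop : IsCoprime a b) (k : ℤ)
    {r v : ℤ} (hr₀ : 0 ≤ r) (hr : r < 2 * (a + b))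
    (hv : zigzagProfile a b r ≡ v [ZMOD 2 * (a + b)]) :
    zigzag a b k ≡ v [ZMOD 2 * (a + b)] ↔ k % (2 * (a + b)) = r := by
  rw [zigzag,
    ← extendPeriodic_modEq_iff (by omega) (zigzagProfile_eq_of_modEq hodd hcop) k hr₀ hr]
  exact ⟨fun h => h.trans hv.symm, fun h => h.trans hv⟩

lemma zigzagProfile_add_modEq (hodd : Odd a) :
    zigzagProfile a b (a + b) ≡ a + b [ZMOD 2 * (a + b)] := by
  obtain ⟨m, hm⟩ := hodd
  exact Int.modEq_iff_dvd.2 ⟨-m, by rw [zigzagProfile, if_pos le_rfl, hm]; ring⟩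

lemma zigzagProfile_add_add_one_modEq (hodd : Odd a) :
    zigzagProfile a b (a + b + 1) ≡ -a [ZMOD 2 * (a + b)] := by
  obtain ⟨m, hm⟩ := hodd
  exact Int.modEq_iff_dvd.2 ⟨-(m + 1), by rw [zigzagProfile, if_neg (by omega), hm]; ring⟩

lemma zigzagProfile_two_mul_sub_one_modEq (ha : 0 < a) (hb : 0 < b) :
    zigzagProfile a b (2 * (a + b) - 1) ≡ -b [ZMOD 2 * (a + b)] :=
  Int.modEq_iff_dvd.2 ⟨-1, by rw [zigzagProfile, if_neg (by omega)]; ring⟩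

lemma zigzag_adj_add_left (ha : 0 < a) (hb : 0 < b) (hab : a ≠ b) (hodd : Odd a)
    (hcop : IsCoprime a b) (u : ℤ) :
    (traceGraph (zigzag a b)).Adj u (u + a) ↔
      ¬(u ≡ a + b [ZMOD 2 * (a + b)] ∨ u ≡ -a [ZMOD 2 * (a + b)]) := by
  have hf := bijective_zigzag ha hb hodd hcop
  obtain ⟨k, rfl⟩ := hf.2 u
  rw [traceGraph_adj_add_iff hf.1, zigzag_add_one_sub ha hb, zigzag_sub_one_sub ha hb,
    zigzag_modEq_iff ha hb hodd hcop k (by omega) (by omega) (zigzagProfile_add_modEq hodd),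
    zigzag_modEq_iff ha hb hodd hcop k (by omega) (by omega)
      (zigzagProfile_add_add_one_modEq hodd)]
  have hr₀ := Int.emod_nonneg k (by omega : 2 * (a + b) ≠ 0)
  have hr := Int.emod_lt_of_pos k (by omega : 0 < 2 * (a + b))
  simp only [zigzagStep]
  split_ifs <;> omega

lemma zigzag_adj_add_right (ha : 0 < a) (hb : 0 < b) (hab : a ≠ b) (hodd : Odd a)
    (hcop : IsCoprime a b) (u : ℤ) :
    (traceGraph (zigzag a b)).Adj u (u + b) ↔
      u ≡ a + b [ZMOD 2 * (a + b)] ∨ u ≡ -b [ZMOD 2 * (a + b)] := by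
  have hf := bijective_zigzag ha hb hodd hcop
  obtain ⟨k, rfl⟩ := hf.2 u
  rw [traceGraph_adj_add_iff hf.1, zigzag_add_one_sub ha hb, zigzag_sub_one_sub ha hb,
    zigzag_modEq_iff ha hb hodd hcop k (by omega) (by omega) (zigzagProfile_add_modEq hodd),
    zigzag_modEq_iff ha hb hodd hcop k (by omega) (by omega)
      (zigzagProfile_two_mul_sub_one_modEq ha hb)]
  have hr₀ := Int.emod_nonneg k (by omega : 2 * (a + b) ≠ 0)
  have hr := Int.emod_lt_of_pos k (by omega : 0 < 2 * (a + b))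
  simp only [zigzagStep]
  split_ifs <;> omega

end Zigzag

theorem stmt6 (a b : ℤ) (ha : 0 < a) (hb : 0 < b) (hab : a ≠ b)
    (haodd : Odd a) (hbodd : Odd b) (hcop : Int.gcd a b = 1) :
    HamDecomp (cay ({a, b} : Set ℤ)) 2 := by
  have hcop' : IsCoprime a b := Int.isCoprime_iff_gcd_eq_one.2 hcop
  have hQ := isHamPath_zigzag hb ha hbodd hcop'.symm
  rw [Set.pair_comm] at hQ
  refine hamDecomp_two_of_adj_add_iff (isHamPath_zigzag ha hb haodd hcop') hQ ?_
  rintro u d (hd | hd)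
  · rw [hd, zigzag_adj_add_left ha hb hab haodd hcop',
      zigzag_adj_add_right hb ha hab.symm hbodd hcop'.symm, add_comm b a]
  · rw [Set.mem_singleton_iff.1 hd, zigzag_adj_add_right ha hb hab haodd hcop',
      zigzag_adj_add_left hb ha hab.symm hbodd hcop'.symm, add_comm b a, not_not]
end

section
/- The graph Cay(ℤ, {±1, ±2, ±4}) admits a decomposition into 3 edge-disjoint two-way-infinite Hamilton paths; explicitly, if H₁ is the union over i ∈ ℤ of the translates by 3i of the path [0, 1, -1, 3], then {H₁, H₁+1, H₁+2} is such a decomposition. -/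
/-- Translate of a graph on ℤ by `t`. -/
def shiftGraph (H : SimpleGraph ℤ) (t : ℤ) : SimpleGraph ℤ where
  Adj u v := H.Adj (u - t) (v - t)
  symm := ⟨fun _ _ h => H.adj_symm h⟩
  loopless := ⟨fun _ h => H.irrefl h⟩

/-- The path graph determined by a list of vertices. -/
def listGraph (l : List ℤ) : SimpleGraph ℤ :=
  SimpleGraph.fromEdgeSet {e | ∃ i : ℕ, i + 1 < l.length ∧ e = s(l.getD i 0, l.getD (i+1) 0)}

/-!
Written out, `H₁` is the two-way-infinite path `…, 3i, 3i+1, 3i-1, 3i+3, 3i+4, 3i+2, …`; its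
edges are the pairs `{u, u+1}` with `u ≡ 0` and `{u, u+2}`, `{u, u+4}` with `u ≡ 2 (mod 3)`.
So every vertex has degree 2, and consecutive integers are joined inside `H₁` by a path of
length at most 4, whence `H₁` is a Hamilton path of the Cayley graph; the translates are too,
since the Cayley graph is translation invariant. An edge `{u, u+d}` of the Cayley graph lies in
`H₁ + t` exactly when `t ≡ u` (for `d = 1`) or `t ≡ u - 2` (for `d = 2, 4`) modulo 3, which gives
both disjointness and covering.
-/

open SimpleGraph

@[simp]
lemma shiftGraph_adj {H : SimpleGraph ℤ} {t u v : ℤ} :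
    (shiftGraph H t).Adj u v ↔ H.Adj (u - t) (v - t) :=
  Iff.rfl

def shiftGraphIso (H : SimpleGraph ℤ) (t : ℤ) : H ≃g shiftGraph H t where
  toEquiv := Equiv.addRight t
  map_rel_iff' := by simp

lemma shiftGraph_cay (S : Set ℤ) (t : ℤ) : shiftGraph (cay S) t = cay S := by
  ext u v
  simp [cay]

lemma IsHamPath.shift {G H : SimpleGraph ℤ} (hH : IsHamPath G H) {t : ℤ}
    (hG : shiftGraph G t = G) : IsHamPath G (shiftGraph H t) := by
  obtain ⟨hle, hconn, hdeg⟩ := hH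
  refine ⟨fun u v huv => hG ▸ hle huv, (shiftGraphIso H t).connected_iff.1 hconn, fun v => ?_⟩
  have : (shiftGraph H t).neighborSet v = (· - t) ⁻¹' H.neighborSet (v - t) := rfl
  rw [this, Set.ncard_preimage_of_injective_subset_range (sub_left_injective)
    (fun w _ => ⟨w + t, add_sub_cancel_right w t⟩), hdeg]

lemma listGraph_singleton (a : ℤ) : listGraph [a] = ⊥ := by
  ext u v
  simp [listGraph]

lemma listGraph_cons_cons (a b : ℤ) (l : List ℤ) :
    listGraph (a :: b :: l) = edge a b ⊔ listGraph (b :: l) := by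
  ext u v
  simp only [listGraph, edge, ← SimpleGraph.fromEdgeSet_union]
  congr! 3
  ext e
  simp only [Set.mem_ofPred_eq, Set.mem_union, Set.mem_singleton_iff, List.length_cons]
  constructor
  · rintro ⟨_ | i, hi, rfl⟩
    · simp
    · exact Or.inr ⟨i, by omega, rfl⟩
  · rintro (rfl | ⟨i, hi, rfl⟩)
    · exact ⟨0, by omega, rfl⟩
    · exact ⟨i + 1, by omega, rfl⟩

def IsForwardEdge (u v : ℤ) : Prop :=
  (v = u + 1 ∧ u % 3 = 0) ∨ (v = u + 2 ∧ u % 3 = 2) ∨ (v = u + 4 ∧ u % 3 = 2)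

def H₁ : SimpleGraph ℤ := ⨆ i : ℤ, shiftGraph (listGraph [0, 1, -1, 3]) (3 * i)

lemma H₁_eq_fromRel : H₁ = fromRel IsForwardEdge := by
  ext u v
  simp only [H₁, listGraph_cons_cons, listGraph_singleton, iSup_adj, shiftGraph_adj,
    sup_adj, edge_adj, bot_adj, or_false,
    fromRel_adj, IsForwardEdge]
  constructor
  · rintro ⟨i, h⟩
    omega
  · rintro ⟨-, h⟩
    -- the lower end of an edge of `listGraph [0, 1, -1, 3] + 3 * i` is `3 * i` or `3 * i - 1`
    exact ⟨(min u v + 1) / 3, by omega⟩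

lemma connected_of_reachable_add_one {G : SimpleGraph ℤ} (h : ∀ n, G.Reachable n (n + 1)) :
    G.Connected := by
  have reach_zero (m : ℤ) : G.Reachable 0 m := by
    induction m using Int.induction_on with
    | zero => rfl
    | succ k ih => exact ih.trans (h k)
    | pred k ih => exact ih.trans (by simpa using (h (-k - 1)).symm)
  exact (connected_iff G).2
    ⟨fun u v => (reach_zero u).symm.trans (reach_zero v), ⟨0⟩⟩

instance {V : Type*} (G : SimpleGraph V) : Trans G.Reachable G.Reachable G.Reachable :=
  ⟨.trans⟩

lemma H₁_reachable_add_one (n : ℤ) : H₁.Reachable n (n + 1) := by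
  have adj {u v : ℤ}
      (huv : IsForwardEdge u v ∨ IsForwardEdge v u := by unfold IsForwardEdge; omega) :
      H₁.Reachable u v := by
    rw [H₁_eq_fromRel]
    refine Adj.reachable ((fromRel_adj _ _ _).2 ⟨?_, huv⟩)
    unfold IsForwardEdge at huv
    omega
  rcases (by omega : n % 3 = 0 ∨ n % 3 = 1 ∨ n % 3 = 2) with h | h | h
  · exact adj
  · calc H₁.Reachable n (n - 2) := adj
      H₁.Reachable _ (n + 2) := adj
      H₁.Reachable _ (n + 3) := adj
      H₁.Reachable _ (n + 1) := adj
  · calc H₁.Reachable n (n + 2) := adj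
      H₁.Reachable _ (n + 1) := adj

lemma H₁_neighborSet_ncard (v : ℤ) : (H₁.neighborSet v).ncard = 2 := by
  obtain ⟨a, b, hab, hv⟩ : ∃ a b, a ≠ b ∧ H₁.neighborSet v = {a, b} := by
    rcases (by omega : v % 3 = 0 ∨ v % 3 = 1 ∨ v % 3 = 2) with h | h | h
    · exact ⟨v + 1, v - 4, by omega, by ext; simp [H₁_eq_fromRel, IsForwardEdge]; omega⟩
    · exact ⟨v - 1, v - 2, by omega, by ext; simp [H₁_eq_fromRel, IsForwardEdge]; omega⟩
    · exact ⟨v + 2, v + 4, by omega, by ext; simp [H₁_eq_fromRel, IsForwardEdge]; omega⟩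
  rw [hv, Set.ncard_pair hab]

lemma H₁_le_cay : H₁ ≤ cay {1, 2, 4} := by
  intro u v huv
  simp only [H₁_eq_fromRel, fromRel_adj, IsForwardEdge] at huv
  simp only [cay, Set.mem_insert_iff, Set.mem_singleton_iff]
  omega

lemma isHamPath_H₁ : IsHamPath (cay {1, 2, 4}) H₁ :=
  ⟨H₁_le_cay, connected_of_reachable_add_one H₁_reachable_add_one, H₁_neighborSet_ncard⟩

lemma modEq_of_shiftGraph_H₁_adj {t t' u v : ℤ} (h : (shiftGraph H₁ t).Adj u v)
    (h' : (shiftGraph H₁ t').Adj u v) : t ≡ t' [ZMOD 3] := by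
  simp only [shiftGraph_adj, H₁_eq_fromRel, fromRel_adj, IsForwardEdge] at h h'
  rw [Int.ModEq]
  omega

lemma shiftGraph_H₁_emod_three (t : ℤ) : shiftGraph H₁ (t % 3) = shiftGraph H₁ t := by
  ext u v
  simp only [shiftGraph_adj, H₁_eq_fromRel, fromRel_adj, IsForwardEdge]
  omega

lemma exists_shiftGraph_H₁_adj {u v : ℤ} (h : (cay {1, 2, 4}).Adj u v) :
    ∃ j : Fin 3, (shiftGraph H₁ j).Adj u v := by
  obtain ⟨t, ht⟩ : ∃ t, (shiftGraph H₁ t).Adj u v := by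
    simp only [cay, Set.mem_insert_iff, Set.mem_singleton_iff] at h
    simp only [shiftGraph_adj, H₁_eq_fromRel, fromRel_adj, IsForwardEdge]
    rcases h with ⟨-, (h | h | h) | (h | h | h)⟩
    exacts [⟨v, by omega⟩, ⟨v - 2, by omega⟩, ⟨v - 2, by omega⟩,
      ⟨u, by omega⟩, ⟨u - 2, by omega⟩, ⟨u - 2, by omega⟩]
  refine ⟨⟨(t % 3).toNat, by omega⟩, ?_⟩
  rwa [Fin.val_mk, Int.toNat_of_nonneg (by omega), shiftGraph_H₁_emod_three]

theorem stmt10 :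
    ∀ H1 : SimpleGraph ℤ,
      H1 = (⨆ i : ℤ, shiftGraph (listGraph [0, 1, -1, 3]) (3 * i)) →
      (∀ j : Fin 3, IsHamPath (cay ({1, 2, 4} : Set ℤ)) (shiftGraph H1 ((j : ℕ) : ℤ))) ∧
      (∀ j j' : Fin 3, j ≠ j' →
        Disjoint (shiftGraph H1 ((j : ℕ) : ℤ)).edgeSet (shiftGraph H1 ((j' : ℕ) : ℤ)).edgeSet) ∧
      (∀ e ∈ (cay ({1, 2, 4} : Set ℤ)).edgeSet,
        ∃ j : Fin 3, e ∈ (shiftGraph H1 ((j : ℕ) : ℤ)).edgeSet) := by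
  rintro H1 rfl
  refine ⟨fun j => isHamPath_H₁.shift (shiftGraph_cay _ _), fun j j' hjj' => ?_, ?_⟩
  · rw [Set.disjoint_left]
    rintro ⟨u, v⟩ h h'
    have hmod := modEq_of_shiftGraph_H₁_adj h h'
    exact hjj' (Fin.ext (by rw [Int.ModEq] at hmod; omega))
  · rintro ⟨u, v⟩ h
    exact exists_shiftGraph_H₁_adj h
end

section
/- Let k ≥ 3 be odd and let a₁, ..., a_{k-1} be distinct positive integers not divisible by k such that a₁ + ⋯ + a_{k-1} + k ≡ k (mod 2) (equivalently, a₁ + ⋯ + a_{k-1} is even). Suppose there is a Hamilton path Q in the complete graph on ℤ_k such that the multiset of edge lengths of Q equals the multiset {ℓ([0],[aᵢ]) : i = 1, ..., k-1}, where ℓ denotes circular distance in ℤ_k. Then Cay(ℤ, ±{a₁, ..., a_{k-1}, k}) admits a decomposition into k edge-disjoint two-way-infinite Hamilton paths. -/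
/-- Circular distance of `x` from `0` in `ℤ_k`. -/
def circDist (k : ℕ) (x : ZMod k) : ℕ := min x.val (k - x.val)

/-!
Lift the Hamilton path `q` of `K_k` to a path `x 0 = 0, x 1, …, x (k - 1)` in `ℤ` whose steps
are `±aᵢ`, the sign of each step chosen so that `x t ≡ q t - q 0 (mod k)`. Then `x` meets every
residue class mod `k` once and has every `aᵢ` as a step length exactly once, so every edge of
length some `aᵢ` lies in exactly one translate `c + x`, `c ∈ ℤ`.

For `0 ≤ i < k`, the `i`-th Hamilton path runs through the translates `i + k n + x`, `n ∈ ℤ`,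
joining `c + x` to `c + k + x` by an edge of length `k` at the top `c + x (k - 1)` when `c` is
even and at the bottom `c + x 0` when `c` is odd. As `k` is odd, `c` and `c + k` have opposite
parities, so top and bottom joins alternate and the translates are traversed alternately forwards
and backwards. As `x (k - 1) ≡ ∑ aᵢ` is even, the join leaving `c + x` starts at a vertex of the
parity of `c`, and this makes every edge of length `k` a join of exactly one translate.
-/

open Function SimpleGraph

def pathAlong (f : ℤ → ℤ) : SimpleGraph ℤ :=
  SimpleGraph.fromRel fun u v => ∃ s, f s = u ∧ f (s + 1) = v

lemma mem_edgeSet_pathAlong {f : ℤ → ℤ} (hf : Injective f) {e : Sym2 ℤ} :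
    e ∈ (pathAlong f).edgeSet ↔ ∃ s, e = s(f s, f (s + 1)) := by
  induction e using Sym2.ind with
  | _ u v =>
    simp only [pathAlong, mem_edgeSet, fromRel_adj, Sym2.eq_iff]
    constructor
    · rintro ⟨-, ⟨s, rfl, rfl⟩ | ⟨s, rfl, rfl⟩⟩
      exacts [⟨s, .inl ⟨rfl, rfl⟩⟩, ⟨s, .inr ⟨rfl, rfl⟩⟩]
    · rintro ⟨s, ⟨rfl, rfl⟩ | ⟨rfl, rfl⟩⟩
      · exact ⟨hf.ne (by omega), .inl ⟨s, rfl, rfl⟩⟩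
      · exact ⟨hf.ne (by omega), .inr ⟨s, rfl, rfl⟩⟩

lemma neighborSet_pathAlong {f : ℤ → ℤ} (hf : Injective f) (s : ℤ) :
    (pathAlong f).neighborSet (f s) = {f (s - 1), f (s + 1)} := by
  ext u
  simp only [mem_neighborSet, pathAlong, fromRel_adj, Set.mem_insert_iff,
    Set.mem_singleton_iff, hf.eq_iff]
  constructor
  · rintro ⟨-, ⟨s', rfl, rfl⟩ | ⟨s', rfl, hs'⟩⟩
    · exact .inr rfl
    · exact .inl (by rw [← hs']; ring_nf)
  · rintro (rfl | rfl)
    · exact ⟨hf.ne (by omega), .inr ⟨s - 1, rfl, by ring_nf⟩⟩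
    · exact ⟨hf.ne (by omega), .inl ⟨s, rfl, rfl⟩⟩

lemma isHamPath_pathAlong {G : SimpleGraph ℤ} {f : ℤ → ℤ} (hf : Bijective f)
    (hG : ∀ s, G.Adj (f s) (f (s + 1))) : IsHamPath G (pathAlong f) := by
  refine ⟨?_, ?_, fun v => ?_⟩
  · rintro u v ⟨-, ⟨s, rfl, rfl⟩ | ⟨s, rfl, rfl⟩⟩
    exacts [hG s, (hG s).symm]
  · have hstep : ∀ s, (pathAlong f).Reachable (f s) (f (s + 1)) := fun s =>
      Adj.reachable ⟨hf.1.ne (by omega), .inl ⟨s, rfl, rfl⟩⟩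
    have hreach : ∀ s, (pathAlong f).Reachable (f 0) (f s) := by
      intro s
      induction s using Int.induction_on with
      | zero => rfl
      | succ n ih => exact ih.trans (hstep n)
      | pred n ih => exact ih.trans (by simpa using (hstep (-n - 1)).symm)
    refine ⟨fun u v => ?_⟩
    obtain ⟨s, rfl⟩ := hf.2 u
    obtain ⟨s', rfl⟩ := hf.2 v
    exact (hreach s).symm.trans (hreach s')
  · obtain ⟨s, rfl⟩ := hf.2 v
    rw [neighborSet_pathAlong hf.1, Set.ncard_pair (hf.1.ne (by omega))]

section Snake

variable {k : ℕ} {x : ℕ → ℤ}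

variable (k) in
/-- Position in `x` of the `r`-th vertex visited in the translate `c + x`. -/
def copyPos (c : ℤ) (r : ℕ) : ℕ := if Even c then r else k - 1 - r

variable (k x) in
def linkStart (c : ℤ) : ℤ := c + x (copyPos k c (k - 1))

variable (k x) in
/-- The `n`-th block of `k` consecutive arguments enumerates the translate `i + k * n + x`. -/
def snake (i s : ℤ) : ℤ := i + k * (s / k) + x (copyPos k (i + k * (s / k)) (s % k).toNat)

variable (k x) in
def copyEdges (c : ℤ) : Set (Sym2 ℤ) :=
  insert s(linkStart k x c, linkStart k x c + k) {e | ∃ t < k - 1, e = s(c + x t, c + x (t + 1))}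

variable (k x) in
def stepLengths : Set ℤ := (fun t => |x (t + 1) - x t|) '' Set.Iio (k - 1)

lemma copyPos_lt {c : ℤ} {r : ℕ} (hr : r < k) : copyPos k c r < k := by
  unfold copyPos; split_ifs <;> omega

lemma copyPos_copyPos {c : ℤ} {r : ℕ} (hr : r < k) : copyPos k c (copyPos k c r) = r := by
  unfold copyPos; split_ifs <;> omega

lemma exists_eq_mul_add (hk : 0 < k) (s : ℤ) : ∃ n, ∃ r < k, s = k * n + r := by
  have := Int.mul_ediv_add_emod s k
  have := Int.emod_nonneg s (by omega : (k : ℤ) ≠ 0)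
  have := Int.emod_lt_of_pos s (by omega : (0 : ℤ) < k)
  exact ⟨s / k, (s % k).toNat, by omega, by omega⟩

lemma snake_mul_add (hk : 0 < k) (i n : ℤ) {r : ℕ} (hr : r < k) :
    snake k x i (k * n + r) = i + k * n + x (copyPos k (i + k * n) r) := by
  obtain ⟨hn, hr'⟩ := (Int.ediv_emod_unique (b := k) (by omega)).2
    ⟨(add_comm _ _ : (r : ℤ) + k * n = k * n + r), by omega, by omega⟩
  simp [snake, hn, hr']

lemma snake_block (hk : 0 < k) (i n : ℤ) {r : ℕ} (hr : r + 1 < k) :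
    s(snake k x i (k * n + r), snake k x i (k * n + r + 1)) =
      s(i + k * n + x (copyPos k (i + k * n) r),
        i + k * n + x (copyPos k (i + k * n) (r + 1))) := by
  have hnext : (k : ℤ) * n + r + 1 = k * n + (r + 1 : ℕ) := by push_cast; ring
  rw [hnext, snake_mul_add hk i n (by omega), snake_mul_add hk i n hr]

lemma snake_link (hk : Odd k) (i n : ℤ) :
    s(snake k x i (k * n + (k - 1 : ℕ)), snake k x i (k * n + (k - 1 : ℕ) + 1)) =
      s(linkStart k x (i + k * n), linkStart k x (i + k * n) + k) := by
  have hk0 := hk.pos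
  have hpos : copyPos k (i + k * (n + 1)) 0 = copyPos k (i + k * n) (k - 1) := by
    have hk' : ¬ Even (k : ℤ) := by exact_mod_cast Nat.not_even_iff_odd.mpr hk
    have : Even (i + k * (n + 1)) ↔ ¬ Even (i + k * n) := by
      rw [show i + k * (n + 1) = i + k * n + k by ring, Int.even_add]
      tauto
    unfold copyPos; split_ifs <;> first | omega | tauto
  have hnext : k * n + (k - 1 : ℕ) + 1 = k * (n + 1) + (0 : ℕ) := by
    rw [Nat.cast_sub hk0]; push_cast; ring
  rw [snake_mul_add hk0 i n (by omega), hnext, snake_mul_add hk0 i (n + 1) hk0, hpos, linkStart]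
  congr 1
  ring

lemma mem_copyEdges_iff (hk : Odd k) {i n : ℤ} {e : Sym2 ℤ} :
    e ∈ copyEdges k x (i + k * n) ↔
      ∃ r < k, e = s(snake k x i (k * n + r), snake k x i (k * n + r + 1)) := by
  have hk0 := hk.pos
  constructor
  · rintro (rfl | ⟨t, ht, rfl⟩)
    · exact ⟨k - 1, by omega, (snake_link hk i n).symm⟩
    by_cases hc : Even (i + k * n)
    · refine ⟨t, by omega, ?_⟩
      rw [snake_block hk0 i n (by omega)]
      simp [copyPos, hc]
    · refine ⟨k - 2 - t, by omega, ?_⟩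
      rw [snake_block hk0 i n (by omega), Sym2.eq_swap]
      simp only [copyPos, hc, if_false]
      congr 3 <;> omega
  · rintro ⟨r, hr, rfl⟩
    rcases Nat.lt_or_ge (r + 1) k with hr' | hr'
    · rw [snake_block hk0 i n hr']
      right
      by_cases hc : Even (i + k * n)
      · exact ⟨r, by omega, by simp [copyPos, hc]⟩
      · refine ⟨k - 2 - r, by omega, ?_⟩
        simp only [copyPos, hc, if_false, Sym2.eq_swap (a := i + k * n + x (k - 1 - r))]
        congr 3 <;> omega
    · obtain rfl : r = k - 1 := by omega
      rw [snake_link hk i n]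
      exact Set.mem_insert _ _

lemma exists_eq_add_mul_of_injOn (hk : 0 < k)
    (hres : Set.InjOn (fun t => (x t : ZMod k)) (Set.Iio k)) (v : ℤ) :
    ∃ t < k, ∃ n : ℤ, v = x t + k * n := by
  have : NeZero k := ⟨hk.ne'⟩
  have hbij : Bijective fun t : Fin k => (x t : ZMod k) :=
    (Fintype.bijective_iff_injective_and_card _).2
      ⟨fun t t' h => Fin.ext (hres t.2 t'.2 h), by simp⟩
  obtain ⟨t, ht⟩ := hbij.2 v
  obtain ⟨n, hn⟩ := (ZMod.intCast_eq_intCast_iff_dvd_sub _ _ _).1 ht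
  exact ⟨t, t.2, n, by linarith⟩

lemma not_dvd_step (hres : Set.InjOn (fun t => (x t : ZMod k)) (Set.Iio k)) {t : ℕ}
    (ht : t + 1 < k) : ¬ (k : ℤ) ∣ x (t + 1) - x t := fun h =>
  absurd (hres (by simp; omega) (by simp; omega)
    ((ZMod.intCast_eq_intCast_iff_dvd_sub _ _ _).2 h).symm) (by omega)

lemma snake_bijective (hk : 0 < k) (hres : Set.InjOn (fun t => (x t : ZMod k)) (Set.Iio k))
    (i : ℤ) : Bijective (snake k x i) := by
  constructor
  · intro s s' h
    obtain ⟨n, r, hr, rfl⟩ := exists_eq_mul_add hk s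
    obtain ⟨n', r', hr', rfl⟩ := exists_eq_mul_add hk s'
    rw [snake_mul_add hk i n hr, snake_mul_add hk i n' hr'] at h
    have hmod : (x (copyPos k (i + k * n) r) : ZMod k) = x (copyPos k (i + k * n') r') := by
      have := congrArg (Int.cast : ℤ → ZMod k)
        (by linarith : x (copyPos k (i + k * n) r) = x (copyPos k (i + k * n') r') + k * (n' - n))
      simpa using this
    have hp := hres (copyPos_lt hr) (copyPos_lt hr') hmod
    rw [hp] at h
    obtain rfl : n = n' := by
      have : (k : ℤ) * n = k * n' := by linarith
      exact mul_left_cancel₀ (by omega) this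
    rw [← copyPos_copyPos (c := i + k * n) hr, hp, copyPos_copyPos hr']
  · intro v
    obtain ⟨t, ht, n, hv⟩ := exists_eq_add_mul_of_injOn hk hres (v - i)
    refine ⟨k * n + copyPos k (i + k * n) t, ?_⟩
    rw [snake_mul_add hk i n (copyPos_lt ht), copyPos_copyPos ht]
    linarith

lemma mem_edgeSet_pathAlong_snake (hk : Odd k)
    (hres : Set.InjOn (fun t => (x t : ZMod k)) (Set.Iio k)) (i : ℤ) (e : Sym2 ℤ) :
    e ∈ (pathAlong (snake k x i)).edgeSet ↔ ∃ n, e ∈ copyEdges k x (i + k * n) := by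
  rw [mem_edgeSet_pathAlong (snake_bijective hk.pos hres i).1]
  constructor
  · rintro ⟨s, rfl⟩
    obtain ⟨n, r, hr, rfl⟩ := exists_eq_mul_add hk.pos s
    exact ⟨n, (mem_copyEdges_iff hk).2 ⟨r, hr, rfl⟩⟩
  · rintro ⟨n, he⟩
    obtain ⟨r, -, rfl⟩ := (mem_copyEdges_iff hk).1 he
    exact ⟨_, rfl⟩

lemma linkStart_bijective (h0 : x 0 = 0) (heven : Even (x (k - 1))) :
    Bijective (linkStart k x) := by
  have hls : ∀ c, linkStart k x c = if Even c then c + x (k - 1) else c := by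
    intro c
    by_cases hc : Even c <;> simp [linkStart, copyPos, hc, h0]
  constructor
  · intro c c' h
    rw [hls, hls] at h
    by_cases hc : Even c <;> by_cases hc' : Even c' <;>
      simp only [hc, hc', if_true, if_false] at h
    · linarith
    · exact absurd (h ▸ hc.add heven) hc'
    · exact absurd (h ▸ hc'.add heven) hc
    · exact h
  · intro u
    by_cases hu : Even u
    · refine ⟨u - x (k - 1), ?_⟩
      rw [hls, if_pos ((Int.even_sub).2 (by tauto))]
      ring
    · exact ⟨u, by rw [hls, if_neg hu]⟩

lemma copyEdges_subset_edgeSet (hk : 0 < k)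
    (hres : Set.InjOn (fun t => (x t : ZMod k)) (Set.Iio k)) (c : ℤ) :
    copyEdges k x c ⊆ (cay (stepLengths k x ∪ {(k : ℤ)})).edgeSet := by
  rintro e (rfl | ⟨t, ht, rfl⟩)
  · exact ⟨by omega, .inr (.inr (by simp))⟩
  · have hlen : |x (t + 1) - x t| ∈ stepLengths k x := ⟨t, ht, rfl⟩
    have hne : x (t + 1) - x t ≠ 0 := fun h => not_dvd_step hres (by omega) (h ▸ dvd_zero _)
    refine ⟨by omega, ?_⟩
    rcases abs_cases (x (t + 1) - x t) with ⟨h, -⟩ | ⟨h, -⟩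
    · exact .inr (.inl (by rw [h] at hlen; convert hlen using 1; ring))
    · exact .inl (.inl (by rw [h] at hlen; convert hlen using 1; ring))

lemma exists_mem_copyEdges (h0 : x 0 = 0) (heven : Even (x (k - 1))) {u v : ℤ}
    (huv : (cay (stepLengths k x ∪ {(k : ℤ)})).Adj u v) : ∃ c, s(u, v) ∈ copyEdges k x c := by
  suffices key : ∀ u v, v - u ∈ stepLengths k x ∪ {(k : ℤ)} → ∃ c, s(u, v) ∈ copyEdges k x c by
    rcases huv.2 with h | h
    · simpa only [Sym2.eq_swap] using key v u h
    · exact key u v h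
  rintro u v (⟨t, ht, hd⟩ | hd)
  · rcases abs_cases (x (t + 1) - x t) with ⟨h, -⟩ | ⟨h, -⟩
    · refine ⟨u - x t, .inr ⟨t, ht, ?_⟩⟩
      congr 1 <;> simp only at hd <;> linarith
    · refine ⟨u - x (t + 1), .inr ⟨t, ht, ?_⟩⟩
      rw [Sym2.eq_swap]
      congr 1 <;> simp only at hd <;> linarith
  · obtain ⟨c, hc⟩ := (linkStart_bijective h0 heven).2 u
    refine ⟨c, .inl ?_⟩
    rw [Set.mem_singleton_iff] at hd
    rw [hc, ← hd, add_sub_cancel]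

lemma eq_of_mem_copyEdges (hk : 0 < k) (hres : Set.InjOn (fun t => (x t : ZMod k)) (Set.Iio k))
    (hinj : Set.InjOn (fun t => |x (t + 1) - x t|) (Set.Iio (k - 1)))
    (h0 : x 0 = 0) (heven : Even (x (k - 1))) {c c' : ℤ} {e : Sym2 ℤ}
    (he : e ∈ copyEdges k x c) (he' : e ∈ copyEdges k x c') : c = c' := by
  have hstep : ∀ t < k - 1, ¬ (k : ℤ) ∣ x (t + 1) - x t := fun t ht =>
    not_dvd_step hres (by omega)
  rcases he with rfl | ⟨t, ht, rfl⟩ <;> rcases he' with h | ⟨t', ht', h⟩ <;>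
    simp only [Sym2.eq_iff] at h
  · rcases h with ⟨h, -⟩ | ⟨h, h'⟩
    · exact (linkStart_bijective h0 heven).1 h
    · linarith
  · rcases h with ⟨h, h'⟩ | ⟨h, h'⟩
    · exact (hstep t' ht' ⟨1, by linarith⟩).elim
    · exact (hstep t' ht' ⟨-1, by linarith⟩).elim
  · rcases h with ⟨h, h'⟩ | ⟨h, h'⟩
    · exact (hstep t ht ⟨1, by linarith⟩).elim
    · exact (hstep t ht ⟨-1, by linarith⟩).elim
  · have habs : |x (t + 1) - x t| = |x (t' + 1) - x t'| := by
      rcases h with ⟨h, h'⟩ | ⟨h, h'⟩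
      · congr 1; linarith
      · rw [← abs_neg]; congr 1; linarith
    obtain rfl := hinj ht ht' habs
    rcases h with ⟨h, -⟩ | ⟨h, h'⟩
    · linarith
    · exact (hstep t ht ⟨0, by linarith⟩).elim

end Snake

theorem hamDecomp_cay_stepLengths {k : ℕ} (hk : Odd k) {x : ℕ → ℤ} (h0 : x 0 = 0)
    (hres : Set.InjOn (fun t => (x t : ZMod k)) (Set.Iio k))
    (hinj : Set.InjOn (fun t => |x (t + 1) - x t|) (Set.Iio (k - 1)))
    (heven : Even (x (k - 1))) :
    HamDecomp (cay (stepLengths k x ∪ {(k : ℤ)})) k := by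
  have hk0 := hk.pos
  refine ⟨fun i => pathAlong (snake k x i),
    fun i => isHamPath_pathAlong (snake_bijective hk0 hres i) fun s => ?_,
    fun i j hij => Set.disjoint_left.2 fun e hi hj => hij ?_, fun e he => ?_⟩
  · obtain ⟨n, hn⟩ := (mem_edgeSet_pathAlong_snake hk hres i _).1
      ((mem_edgeSet_pathAlong (snake_bijective hk0 hres i).1).2 ⟨s, rfl⟩)
    exact copyEdges_subset_edgeSet hk0 hres _ hn
  · obtain ⟨n, hn⟩ := (mem_edgeSet_pathAlong_snake hk hres i e).1 hi
    obtain ⟨m, hm⟩ := (mem_edgeSet_pathAlong_snake hk hres j e).1 hj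
    have hmod := congrArg (· % (k : ℤ)) (eq_of_mem_copyEdges hk0 hres hinj h0 heven hn hm)
    simp only [Int.add_mul_emod_self_left] at hmod
    rw [Int.emod_eq_of_lt (by omega) (by omega), Int.emod_eq_of_lt (by omega) (by omega)] at hmod
    exact Fin.ext (by exact_mod_cast hmod)
  · induction e using Sym2.ind with
    | _ u v =>
      obtain ⟨c, hc⟩ := exists_mem_copyEdges h0 heven he
      have hck := Int.emod_lt_of_pos c (by omega : (0 : ℤ) < k)
      have hc0 := Int.emod_nonneg c (by omega : (k : ℤ) ≠ 0)
      refine ⟨⟨(c % k).toNat, by omega⟩, (mem_edgeSet_pathAlong_snake hk hres _ _).2 ⟨c / k, ?_⟩⟩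
      rwa [Fin.val_mk, Int.toNat_of_nonneg hc0, Int.emod_add_mul_ediv]

lemma exists_perm_eq_comp_of_perm_ofFn {α : Type*} [LinearOrder α] {n : ℕ} {f g : Fin n → α}
    (h : (List.ofFn f).Perm (List.ofFn g)) : ∃ σ : Equiv.Perm (Fin n), ∀ i, f i = g (σ i) := by
  have hsort : f ∘ Tuple.sort f = g ∘ Tuple.sort g :=
    List.ofFn_injective <| List.Perm.eq_of_sortedLE (Tuple.monotone_sort f).sortedLE_ofFn
      (Tuple.monotone_sort g).sortedLE_ofFn <|
        ((Tuple.sort f).ofFn_comp_perm f).trans (h.trans ((Tuple.sort g).ofFn_comp_perm g).symm)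
  refine ⟨(Tuple.sort f).symm.trans (Tuple.sort g), fun i => ?_⟩
  simpa using congrFun hsort ((Tuple.sort f).symm i)

lemma eq_or_eq_neg_of_circDist_eq {k : ℕ} [NeZero k] {y z : ZMod k}
    (h : circDist k y = circDist k z) : y = z ∨ y = -z := by
  have hy := ZMod.val_lt y
  have hz := ZMod.val_lt z
  unfold circDist at h
  rcases (by omega : y.val = z.val ∨ y.val + z.val = k) with h' | h'
  · exact .inl (ZMod.val_injective k h')
  · refine .inr (eq_neg_of_add_eq_zero_left ?_)
    rw [← ZMod.natCast_zmod_val y, ← ZMod.natCast_zmod_val z, ← Nat.cast_add, h',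
      ZMod.natCast_self]

lemma even_sum_abs_iff {ι : Type*} (s : Finset ι) (f : ι → ℤ) :
    Even (∑ i ∈ s, |f i|) ↔ Even (∑ i ∈ s, f i) := by
  rw [← Int.even_sub, ← Finset.sum_sub_distrib]
  exact Finset.even_sum _ fun i _ => Int.even_sub.2 even_abs

theorem hamDecomp_cay_of_signed_steps {k : ℕ} (hk : Odd k) {a : Fin (k - 1) → ℤ}
    (hainj : Injective a) (heven : Even (∑ i, a i)) {q : ℕ → ZMod k}
    (hq : ∀ x : ZMod k, ∃! j : ℕ, j < k ∧ q j = x) (σ : Equiv.Perm (Fin (k - 1))) {e : ℕ → ℤ}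
    (he : ∀ t (ht : t < k - 1), |e t| = a (σ ⟨t, ht⟩) ∧ (e t : ZMod k) = q (t + 1) - q t) :
    HamDecomp (cay (Set.range a ∪ {(k : ℤ)})) k := by
  set x : ℕ → ℤ := fun t => ∑ l ∈ Finset.range t, e l with hx
  have hstep : ∀ t, x (t + 1) - x t = e t := fun t => Finset.sum_range_succ_sub_sum e
  have hxq : ∀ t < k, (x t : ZMod k) = q t - q 0 := by
    intro t ht
    push_cast [hx]
    rw [Finset.sum_congr rfl fun l hl => (he l (by simp at hl; omega)).2, Finset.sum_range_sub]
  have hlengths : stepLengths k x = Set.range a := by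
    ext d
    simp only [stepLengths, hstep, Set.mem_image, Set.mem_Iio, Set.mem_range]
    constructor
    · rintro ⟨t, ht, rfl⟩
      exact ⟨σ ⟨t, ht⟩, (he t ht).1.symm⟩
    · rintro ⟨j, rfl⟩
      exact ⟨σ.symm j, (σ.symm j).2, by simpa using (he _ (σ.symm j).2).1⟩
  have hsum : ∑ l ∈ Finset.range (k - 1), |e l| = ∑ i, a i := by
    rw [Finset.sum_range, ← Equiv.sum_comp σ a]
    exact Finset.sum_congr rfl fun i _ => (he i i.2).1
  rw [← hlengths]
  refine hamDecomp_cay_stepLengths hk (Finset.sum_range_zero e) (fun t ht t' ht' h => ?_)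
    (fun t ht t' ht' h => ?_) ((even_sum_abs_iff _ _).1 (hsum ▸ heven))
  · obtain ⟨j, -, hj⟩ := hq (q t)
    have h' : q t = q t' := by simpa [hxq t ht, hxq t' ht'] using h
    exact (hj t ⟨ht, rfl⟩).trans (hj t' ⟨ht', h'.symm⟩).symm
  · simp only [hstep, (he t ht).1, (he t' ht').1] at h
    simpa using congrArg Fin.val (σ.injective (hainj h))

theorem stmt12_general (k : ℕ) (hkodd : Odd k)
    (a : Fin (k-1) → ℤ) (hapos : ∀ i, 0 < a i) (hainj : Function.Injective a)
    (heven : Even (∑ i, a i))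
    (q : ℕ → ZMod k)
    (hq : ∀ x : ZMod k, ∃! j : ℕ, j < k ∧ q j = x)
    (hlen : Multiset.ofList ((List.range (k-1)).map fun i => circDist k (q (i+1) - q i))
          = Multiset.ofList (List.ofFn fun i : Fin (k-1) => circDist k ((a i : ZMod k)))) :
    HamDecomp (cay (Set.range a ∪ {(k : ℤ)})) k := by
  have : NeZero k := ⟨hkodd.pos.ne'⟩
  have hperm : (List.ofFn fun t : Fin (k - 1) => circDist k (q (t + 1) - q t)).Perm
      (List.ofFn fun i => circDist k (a i)) := by
    rw [← Multiset.coe_eq_coe, ← hlen, List.ofFn_eq_map, ← List.map_coe_finRange_eq_range,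
      List.map_map]
    rfl
  obtain ⟨σ, hσ⟩ := exists_perm_eq_comp_of_perm_ofFn hperm
  have hsigned : ∀ t, ∃ e : ℤ, ∀ ht : t < k - 1,
      |e| = a (σ ⟨t, ht⟩) ∧ (e : ZMod k) = q (t + 1) - q t := by
    intro t
    by_cases ht : t < k - 1
    · rcases eq_or_eq_neg_of_circDist_eq (hσ ⟨t, ht⟩) with h | h
      · exact ⟨a (σ ⟨t, ht⟩), fun _ => ⟨abs_of_pos (hapos _), h.symm⟩⟩
      · exact ⟨-a (σ ⟨t, ht⟩), fun _ => ⟨by rw [abs_neg, abs_of_pos (hapos _)], by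
          push_cast; exact h.symm⟩⟩
    · exact ⟨0, fun h => absurd h ht⟩
  choose e he using hsigned
  exact hamDecomp_cay_of_signed_steps hkodd hainj heven hq σ he

theorem stmt12 (k : ℕ) (hk3 : 3 ≤ k) (hkodd : Odd k)
    (a : Fin (k-1) → ℤ) (hapos : ∀ i, 0 < a i) (hainj : Function.Injective a)
    (handvd : ∀ i, ¬ ((k : ℤ) ∣ a i))
    (heven : Even (∑ i, a i))
    (q : ℕ → ZMod k)
    (hq : ∀ x : ZMod k, ∃! j : ℕ, j < k ∧ q j = x)
    (hlen : Multiset.ofList ((List.range (k-1)).map fun i => circDist k (q (i+1) - q i))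
          = Multiset.ofList (List.ofFn fun i : Fin (k-1) => circDist k ((a i : ZMod k)))) :
    HamDecomp (cay (Set.range a ∪ {(k : ℤ)})) k :=
  stmt12_general k hkodd a hapos hainj heven q hq hlen
end

section
/- For t an even positive integer, Cay(ℤ, ±{1, 2, 4, 6, ..., 2t}) admits a decomposition into t+1 edge-disjoint two-way-infinite Hamilton paths. -/
/-!
Let `m = t + 1`, which is odd. The path `zigzag m` runs through each block `[m q, m q + m)` as
`m q, m q + 1, m q + 2m - 1, m q + 3, m q + 2m - 3, …, m q + m - 2, m q + m + 2` and then on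
to `m (q + 1)`, so per block it uses each length `1, 2(m - 1), 2(m - 2), …, 2` of the connection
set exactly once, and every edge `{a, a + d}` it uses satisfies `a + 2⌊d/4⌋ ≡ 0 (mod m)`. Hence the
translates `zigzag m + k`, `0 ≤ k < m`, are Hamilton paths whose edges are exactly those with
`a + 2⌊d/4⌋ ≡ k (mod m)`: they are edge-disjoint and together cover the whole Cayley graph.
-/

namespace IntCirculant

open SimpleGraph Function Set

section Cay

variable {S : Set ℤ}

lemma mk_add_mem_edgeSet_cay {a d : ℤ} (hd : d ∈ S) (hd0 : d ≠ 0) :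
    s(a, a + d) ∈ (cay S).edgeSet :=
  ⟨by omega, Or.inr (by rwa [add_sub_cancel_left])⟩

lemma exists_eq_mk_add_of_mem_edgeSet_cay {e : Sym2 ℤ} (he : e ∈ (cay S).edgeSet) :
    ∃ a, ∃ d ∈ S, e = s(a, a + d) := by
  induction e using Sym2.ind with
  | _ u v =>
    rcases he.2 with h | h
    · exact ⟨v, u - v, h, by rw [add_sub_cancel, Sym2.eq_swap]⟩
    · exact ⟨u, v - u, h, by rw [add_sub_cancel]⟩

end Cay

lemma eq_of_mk_add_eq_mk_add {a a' d d' : ℤ} (hd : 0 < d) (hd' : 0 < d')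
    (h : s(a, a + d) = s(a', a' + d')) : a = a' ∧ d = d' := by
  rcases Sym2.eq_iff.mp h with ⟨h1, h2⟩ | ⟨h1, h2⟩ <;> omega

section Hasse

lemma hasse_int_adj {a b : ℤ} : (hasse ℤ).Adj a b ↔ b = a + 1 ∨ a = b + 1 := by
  rw [hasse_adj, Order.covBy_iff_add_one_eq, Order.covBy_iff_add_one_eq]
  omega

lemma hasse_int_connected : (hasse ℤ).Connected :=
  (connected_iff _).mpr ⟨hasse_preconnected_of_succ ℤ, inferInstance⟩

lemma hasse_int_neighborSet (n : ℤ) : (hasse ℤ).neighborSet n = {n - 1, n + 1} := by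
  ext m
  simp only [mem_neighborSet, hasse_int_adj, mem_insert_iff, mem_singleton_iff]
  omega

variable (e : ℤ ≃ ℤ)

lemma edgeSet_map_hasse_int :
    ((hasse ℤ).map e).edgeSet = range fun n => s(e n, e (n + 1)) := by
  ext x
  induction x using Sym2.ind with
  | _ u v =>
    simp only [mem_edgeSet, map_adj', hasse_int_adj, mem_range]
    constructor
    · rintro ⟨-, a, b, rfl | rfl, rfl, rfl⟩
      · exact ⟨a, rfl⟩
      · exact ⟨b, Sym2.eq_swap⟩
    · rintro ⟨n, h⟩
      have hne : e n ≠ e (n + 1) := e.injective.ne (by omega)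
      rcases Sym2.eq_iff.mp h with ⟨rfl, rfl⟩ | ⟨rfl, rfl⟩
      · exact ⟨hne, n, n + 1, Or.inl rfl, rfl, rfl⟩
      · exact ⟨hne.symm, n + 1, n, Or.inr rfl, rfl, rfl⟩

lemma isHamPath_map_hasse_int {G : SimpleGraph ℤ} (h : ∀ n, G.Adj (e n) (e (n + 1))) :
    IsHamPath G ((hasse ℤ).map e) := by
  refine ⟨?_, hasse_int_connected.map (Iso.map e _).toHom (Iso.map e _).surjective, fun v => ?_⟩
  · rintro _ _ ⟨-, a, b, hab, rfl, rfl⟩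
    rcases hasse_int_adj.mp hab with rfl | rfl
    · exact h a
    · exact (h b).symm
  · obtain ⟨n, rfl⟩ := e.surjective v
    rw [← Equiv.coe_toEmbedding, neighborSet_map,
      ncard_image_of_injective _ e.toEmbedding.injective, hasse_int_neighborSet,
      ncard_pair (by omega)]

end Hasse

section Zigzag

variable {m : ℤ}

def blockMap (m : ℤ) (φ : ℤ → ℤ) (n : ℤ) : ℤ := m * (n / m) + φ (n % m)

lemma exists_eq_mul_add (hm : 0 < m) (n : ℤ) : ∃ q r, 0 ≤ r ∧ r < m ∧ n = m * q + r :=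
  ⟨n / m, n % m, Int.emod_nonneg n hm.ne', Int.emod_lt_of_pos n hm,
    (Int.mul_ediv_add_emod n m).symm⟩

lemma blockMap_of_mem {φ : ℤ → ℤ} {r : ℤ} (h0 : 0 ≤ r) (hr : r < m) :
    blockMap m φ r = φ r := by
  rw [blockMap, Int.ediv_eq_zero_of_lt h0 hr, Int.emod_eq_of_lt h0 hr, mul_zero, zero_add]

lemma blockMap_mul_add (hm : m ≠ 0) (φ : ℤ → ℤ) (q n : ℤ) :
    blockMap m φ (m * q + n) = m * q + blockMap m φ n := by
  rw [blockMap, blockMap, add_comm (m * q), Int.add_mul_ediv_left _ _ hm,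
    Int.add_mul_emod_self_left]
  ring

def zigzag (m : ℤ) : ℤ → ℤ :=
  blockMap m fun r => if r = 0 ∨ r % 2 = 1 then r else 2 * m + 1 - r

lemma zigzag_of_mem {r : ℤ} (h0 : 0 ≤ r) (hr : r < m) :
    zigzag m r = if r = 0 ∨ r % 2 = 1 then r else 2 * m + 1 - r :=
  blockMap_of_mem h0 hr

lemma zigzag_mul_add (hm : m ≠ 0) (q n : ℤ) : zigzag m (m * q + n) = m * q + zigzag m n :=
  blockMap_mul_add hm _ q n

lemma zigzag_bijective (hm0 : 0 < m) (hm : Odd m) : Bijective (zigzag m) := by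
  have hodd := Int.odd_iff.mp hm
  have hm' := hm0.ne'
  -- `zigzag` sends `m q + r`, for even `r ≠ 0`, to `m (q + 1) + (m + 1 - r)`; `inv` undoes this.
  let inv := blockMap m fun r => if r = 0 ∨ r % 2 = 1 then r else 1 - r
  refine bijective_iff_has_inverse.mpr ⟨inv, fun n => ?_, fun n => ?_⟩
  all_goals
    obtain ⟨q, r, h0, hr, rfl⟩ := exists_eq_mul_add hm0 n
    simp only [zigzag, inv, blockMap_mul_add hm', blockMap_of_mem h0 hr]
    by_cases hr' : r = 0 ∨ r % 2 = 1
    · simp only [if_pos hr', blockMap_of_mem h0 hr]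
  · rw [if_neg hr', show 2 * m + 1 - r = m * 1 + (m + 1 - r) by ring,
      blockMap_mul_add hm', blockMap_of_mem (by omega) (by omega), if_neg (by omega)]
    ring
  · rw [if_neg hr', show 1 - r = m * (-1) + (m + 1 - r) by ring,
      blockMap_mul_add hm', blockMap_of_mem (by omega) (by omega), if_neg (by omega)]
    ring

def stepLength (m r : ℤ) : ℤ := if r = 0 then 1 else 2 * (m - r)

lemma zigzag_step_of_mem (hm0 : 0 < m) (hm : Odd m) {r : ℤ} (h0 : 0 ≤ r) (hr : r < m) :
    ∃ a, s(zigzag m r, zigzag m (r + 1)) = s(a, a + stepLength m r) ∧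
      m ∣ a + 2 * (stepLength m r / 4) := by
  have hodd := Int.odd_iff.mp hm
  have hsucc (heven : r % 2 = 0) : zigzag m (r + 1) = r + 1 := by
    rcases (by omega : r + 1 < m ∨ r + 1 = m) with hlt | heq
    · rw [zigzag_of_mem (by omega) hlt, if_pos (by omega)]
    · simpa [heq, zigzag_of_mem le_rfl hm0] using zigzag_mul_add hm0.ne' 1 0
  rw [zigzag_of_mem h0 hr]
  rcases (by omega : r = 0 ∨ r % 2 = 1 ∨ (r ≠ 0 ∧ r % 2 = 0)) with rfl | hr2 | ⟨hr0, hr2⟩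
  · rw [hsucc rfl]
    exact ⟨0, by simp [stepLength], by simp [stepLength]⟩
  · rw [if_pos (Or.inr hr2), zigzag_of_mem (by omega) (by omega), if_neg (by omega), stepLength,
      if_neg (by omega)]
    exact ⟨r, Sym2.eq_iff.mpr (by omega), ⟨1, by omega⟩⟩
  · rw [if_neg (by omega), hsucc hr2, stepLength, if_neg hr0]
    exact ⟨r + 1, Sym2.eq_iff.mpr (by omega), ⟨1, by omega⟩⟩

lemma pos_of_mem_image_stepLength {d : ℤ} (hd : d ∈ stepLength m '' Ico 0 m) : 0 < d := by
  obtain ⟨r, ⟨-, hr⟩, rfl⟩ := hd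
  unfold stepLength
  split_ifs <;> omega

lemma zigzag_mul_add_step (hm : m ≠ 0) (q r k : ℤ) :
    s(zigzag m (m * q + r) + k, zigzag m (m * q + r + 1) + k) =
      Sym2.map (· + (m * q + k)) s(zigzag m r, zigzag m (r + 1)) := by
  rw [Sym2.map_mk, add_assoc (m * q) r 1, zigzag_mul_add hm, zigzag_mul_add hm]
  exact Sym2.eq_iff.mpr (Or.inl ⟨by ring, by ring⟩)

lemma zigzag_step (hm0 : 0 < m) (hm : Odd m) (n k : ℤ) :
    ∃ a, ∃ d ∈ stepLength m '' Ico 0 m,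
      s(zigzag m n + k, zigzag m (n + 1) + k) = s(a, a + d) ∧ a + 2 * (d / 4) ≡ k [ZMOD m] := by
  obtain ⟨q, r, h0, hr, rfl⟩ := exists_eq_mul_add hm0 n
  obtain ⟨a, ha, c, hc⟩ := zigzag_step_of_mem hm0 hm h0 hr
  refine ⟨a + (m * q + k), stepLength m r, ⟨r, ⟨h0, hr⟩, rfl⟩, ?_, ?_⟩
  · rw [zigzag_mul_add_step hm0.ne', ha, Sym2.map_mk]
    exact Sym2.eq_iff.mpr (Or.inl ⟨rfl, by ring⟩)
  · exact Int.modEq_iff_dvd.mpr ⟨-(c + q), by linear_combination -hc⟩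

lemma exists_zigzag_step (hm0 : 0 < m) (hm : Odd m) {a d k : ℤ}
    (hd : d ∈ stepLength m '' Ico 0 m) (ha : a + 2 * (d / 4) ≡ k [ZMOD m]) :
    ∃ n, s(zigzag m n + k, zigzag m (n + 1) + k) = s(a, a + d) := by
  obtain ⟨r, ⟨h0, hr⟩, rfl⟩ := hd
  obtain ⟨a₀, ha₀, c, hc⟩ := zigzag_step_of_mem hm0 hm h0 hr
  obtain ⟨q, hq⟩ := Int.modEq_iff_dvd.mp ha
  refine ⟨m * (-c - q) + r, ?_⟩
  rw [zigzag_mul_add_step hm0.ne', ha₀, Sym2.map_mk]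
  exact Sym2.eq_iff.mpr <| Or.inl
    ⟨by linear_combination hc + hq, by linear_combination hc + hq⟩

lemma modEq_of_zigzag_step_eq (hm0 : 0 < m) (hm : Odd m) {n n' k k' : ℤ}
    (h : s(zigzag m n + k, zigzag m (n + 1) + k) = s(zigzag m n' + k', zigzag m (n' + 1) + k')) :
    k ≡ k' [ZMOD m] := by
  obtain ⟨a, d, hd, hs, hc⟩ := zigzag_step hm0 hm n k
  obtain ⟨a', d', hd', hs', hc'⟩ := zigzag_step hm0 hm n' k'
  obtain ⟨rfl, rfl⟩ := eq_of_mk_add_eq_mk_add (pos_of_mem_image_stepLength hd)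
    (pos_of_mem_image_stepLength hd') (hs.symm.trans (h.trans hs'))
  exact hc.symm.trans hc'

end Zigzag

theorem hamDecomp_cay_image_stepLength (m : ℕ) (hm : Odd m) :
    HamDecomp (cay (stepLength m '' Ico 0 m)) m := by
  have hm0 : (0 : ℤ) < m := by exact_mod_cast hm.pos
  have hmZ : Odd (m : ℤ) := by exact_mod_cast hm
  let e (k : ℤ) : ℤ ≃ ℤ :=
    (Equiv.ofBijective _ (zigzag_bijective hm0 hmZ)).trans (Equiv.addRight k)
  have hedges (k : ℤ) : ((hasse ℤ).map (e k)).edgeSet =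
      range fun n => s(zigzag m n + k, zigzag m (n + 1) + k) :=
    edgeSet_map_hasse_int (e k)
  refine ⟨fun k => (hasse ℤ).map (e (k : ℕ)), fun k => isHamPath_map_hasse_int _ fun n => ?_,
    fun k k' hkk' => ?_, fun x hx => ?_⟩
  · obtain ⟨a, d, hd, hstep, -⟩ := zigzag_step hm0 hmZ n k
    change s(zigzag m n + k, zigzag m (n + 1) + k) ∈ (cay _).edgeSet
    exact hstep ▸ mk_add_mem_edgeSet_cay hd (pos_of_mem_image_stepLength hd).ne'
  · rw [Set.disjoint_left, hedges, hedges]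
    rintro _ ⟨n, rfl⟩ ⟨n', hn'⟩
    have hkk : (k : ℕ) ≡ k' [MOD m] :=
      Int.natCast_modEq_iff.mp (modEq_of_zigzag_step_eq hm0 hmZ hn'.symm)
    exact hkk' (Fin.ext (hkk.eq_of_lt_of_lt k.2 k'.2))
  · obtain ⟨a, d, hd, rfl⟩ := exists_eq_mk_add_of_mem_edgeSet_cay hx
    have hc0 : 0 ≤ (a + 2 * (d / 4)) % m := Int.emod_nonneg _ hm0.ne'
    have hcm : (a + 2 * (d / 4)) % m < m := Int.emod_lt_of_pos _ hm0
    refine ⟨⟨((a + 2 * (d / 4)) % m).toNat, by omega⟩, ?_⟩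
    rw [hedges]
    refine exists_zigzag_step hm0 hmZ hd ?_
    rw [Fin.val_mk, Int.toNat_of_nonneg hc0]
    exact (Int.mod_modEq _ _).symm

lemma image_stepLength (t : ℕ) :
    stepLength ((t + 1 : ℕ) : ℤ) '' Ico 0 ((t + 1 : ℕ) : ℤ) =
      {x : ℤ | x = 1 ∨ ∃ j : ℕ, 1 ≤ j ∧ j ≤ t ∧ x = 2 * (j : ℤ)} := by
  ext x
  simp only [mem_image, mem_Ico, mem_ofPred_eq, stepLength]
  constructor
  · rintro ⟨r, ⟨h0, hr⟩, rfl⟩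
    split_ifs with h
    · exact Or.inl rfl
    · exact Or.inr ⟨(t + 1 - r).toNat, by omega, by omega, by omega⟩
  · rintro (rfl | ⟨j, hj1, hjt, rfl⟩)
    · exact ⟨0, ⟨le_rfl, by omega⟩, if_pos rfl⟩
    · exact ⟨t + 1 - j, ⟨by omega, by omega⟩, by rw [if_neg (by omega)]; push_cast; ring⟩

end IntCirculant

theorem stmt15_general (t : ℕ) (hte : Even t) :
    HamDecomp (cay {x : ℤ | x = 1 ∨ ∃ j : ℕ, 1 ≤ j ∧ j ≤ t ∧ x = 2 * (j : ℤ)}) (t + 1) := by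
  rw [← IntCirculant.image_stepLength]
  exact IntCirculant.hamDecomp_cay_image_stepLength (t + 1) hte.add_one

theorem stmt15 (t : ℕ) (ht : 0 < t) (hte : Even t) :
    HamDecomp (cay {x : ℤ | x = 1 ∨ ∃ j : ℕ, 1 ≤ j ∧ j ≤ t ∧ x = 2 * (j : ℤ)}) (t + 1) :=
  stmt15_general t hte
end
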